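/- arXiv:2507.13099 — 9 statements merged into one kernel-verified Lean document; each statement's English description precedes it below -/
import Mathlib

section
/- In the two-agent log-linear economy without intervention (all τ_{i,t} = γ_{i,t} = γ_{d,0} = 0, so T_0 = T_1 = D_0 = 0), if A_1 ≠ A_2, then there exists a unique equilibrium; in it the interest rate is R_1 = max(A_1, A_2), only the agent with the higher productivity invests, aggregate capital equals K_1* = β_2 w_{2,0}/(1+β_2) + β_1 w_{1,0}/(1+β_1), and date-1 output equals Y_1* = (β_2 w_{2,0}/(1+β_2) + β_1 w_{1,0}/(1+β_1)) · max(A_1, A_2). -/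
open Set

/-- Optimality of the plan `(c0, c1, k, b)` for a two-period agent with logarithmic
utility `ln c0 + β ln c1`, endowment `w`, tax rates `τ0, τ1`, transfer shares
`γ0, γ1`, effective productivity `Aeff` (linear technology `F(k) = k`), interest
rate `R`, and government revenues `T0, T1`.  There is no borrowing constraint. -/
def LogAgentOptimal (β w τ0 τ1 γ0 γ1 Aeff R T0 T1 c0 c1 k b : ℝ) : Prop :=
  (0 < c0 ∧ 0 < c1 ∧ 0 ≤ k ∧
    c0 + k ≤ (1 - τ0) * w + b + γ0 * T0 ∧
    c1 ≤ (1 - τ1) * Aeff * k - R * b + γ1 * T1) ∧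
  ∀ c0' c1' k' b' : ℝ,
    0 < c0' → 0 < c1' → 0 ≤ k' →
    c0' + k' ≤ (1 - τ0) * w + b' + γ0 * T0 →
    c1' ≤ (1 - τ1) * Aeff * k' - R * b' + γ1 * T1 →
    Real.log c0' + β * Real.log c1' ≤ Real.log c0 + β * Real.log c1

/-- Competitive equilibrium of the two-agent log-linear economy with effective
productivities `A1e, A2e` and given government revenues `T0, T1`: a positive
interest rate, both agents optimize, the credit market clears, and the goods
markets clear at both dates. -/
def TwoAgentEq (w1 w2 β1 β2 A1e A2e τ10 τ20 τ11 τ21 γ10 γ20 γ11 γ21 T0 T1 : ℝ)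
    (c10 c11 k1 b1 c20 c21 k2 b2 R : ℝ) : Prop :=
  0 < R ∧
  LogAgentOptimal β1 w1 τ10 τ11 γ10 γ11 A1e R T0 T1 c10 c11 k1 b1 ∧
  LogAgentOptimal β2 w2 τ20 τ21 γ20 γ21 A2e R T0 T1 c20 c21 k2 b2 ∧
  b1 + b2 = 0 ∧
  c10 + c20 + k1 + k2 = (1 - τ10) * w1 + (1 - τ20) * w2 + (γ10 + γ20) * T0 ∧
  c11 + c21 = (1 - τ11) * A1e * k1 + (1 - τ21) * A2e * k2 + (γ11 + γ21) * T1

/-- Political-economic equilibrium of the two-agent log-linear economy with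
autonomous productivities `A1, A2`, R&D efficiencies `a1, a2` and policy
`(τᵢₜ, γᵢₜ, γd)`: the government revenues are endogenous, with
`T0 = τ10·w1 + τ20·w2`, `D0 = γd·T0`, effective productivities
`Aᵢe = Aᵢ(1 + aᵢ D0)`, and `T1 = τ11·A1e·k1 + τ21·A2e·k2`. -/
def TwoAgentPolEq (w1 w2 β1 β2 A1 A2 a1 a2 τ10 τ20 τ11 τ21 γ10 γ20 γ11 γ21 γd : ℝ)
    (c10 c11 k1 b1 c20 c21 k2 b2 R : ℝ) : Prop :=
  TwoAgentEq w1 w2 β1 β2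
    (A1 * (1 + a1 * (γd * (τ10 * w1 + τ20 * w2))))
    (A2 * (1 + a2 * (γd * (τ10 * w1 + τ20 * w2))))
    τ10 τ20 τ11 τ21 γ10 γ20 γ11 γ21
    (τ10 * w1 + τ20 * w2)
    (τ11 * (A1 * (1 + a1 * (γd * (τ10 * w1 + τ20 * w2)))) * k1 +
      τ21 * (A2 * (1 + a2 * (γd * (τ10 * w1 + τ20 * w2)))) * k2)
    c10 c11 k1 b1 c20 c21 k2 b2 R


section NoInterventionAux


lemma sum_le {β w R c0 c1 : ℝ} (hβ : 0 < β) (hw : 0 < w) (hR : 0 < R)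
    (hfeas : R * c0 + c1 ≤ R * w) :
    c0 / (w / (1 + β)) + β * (c1 / (R * β * w / (1 + β))) ≤ 1 + β := by
  have h1β : (0:ℝ) < 1 + β := by linarith
  have e1 : c0 / (w / (1 + β)) = (1 + β) * c0 / w := by
    rw [div_div_eq_mul_div]; ring
  have e2 : β * (c1 / (R * β * w / (1 + β))) = (1 + β) * c1 / (R * w) := by
    rw [div_div_eq_mul_div]; field_simp
  rw [e1, e2, div_add_div _ _ hw.ne' (by positivity : (R * w : ℝ) ≠ 0),
    div_le_iff₀ (by positivity)]
  nlinarith [mul_le_mul_of_nonneg_left hfeas (mul_pos h1β hw).le]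

lemma log_bound {β w R c0 c1 : ℝ} (hβ : 0 < β) (hw : 0 < w) (hR : 0 < R)
    (hc0 : 0 < c0) (hc1 : 0 < c1) (hfeas : R * c0 + c1 ≤ R * w) :
    Real.log c0 + β * Real.log c1 ≤
      Real.log (w / (1 + β)) + β * Real.log (R * β * w / (1 + β)) := by
  have h1β : (0:ℝ) < 1 + β := by linarith
  have hc0s : (0:ℝ) < w / (1 + β) := by positivity
  have hc1s : (0:ℝ) < R * β * w / (1 + β) := by positivity
  have h1 : Real.log (c0 / (w / (1 + β))) ≤ c0 / (w / (1 + β)) - 1 :=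
    Real.log_le_sub_one_of_pos (by positivity)
  have h2 : Real.log (c1 / (R * β * w / (1 + β))) ≤ c1 / (R * β * w / (1 + β)) - 1 :=
    Real.log_le_sub_one_of_pos (by positivity)
  rw [Real.log_div hc0.ne' hc0s.ne'] at h1
  rw [Real.log_div hc1.ne' hc1s.ne'] at h2
  have hs := sum_le hβ hw hR hfeas
  nlinarith [mul_le_mul_of_nonneg_left h2 hβ.le]

lemma log_bound_strict {β w R c0 c1 : ℝ} (hβ : 0 < β) (hw : 0 < w) (hR : 0 < R)
    (hc0 : 0 < c0) (hc1 : 0 < c1) (hfeas : R * c0 + c1 ≤ R * w)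
    (hne : c0 ≠ w / (1 + β) ∨ c1 ≠ R * β * w / (1 + β)) :
    Real.log c0 + β * Real.log c1 <
      Real.log (w / (1 + β)) + β * Real.log (R * β * w / (1 + β)) := by
  have h1β : (0:ℝ) < 1 + β := by linarith
  have hc0s : (0:ℝ) < w / (1 + β) := by positivity
  have hc1s : (0:ℝ) < R * β * w / (1 + β) := by positivity
  have hs := sum_le hβ hw hR hfeas
  rcases hne with hne | hne
  · have h1 : Real.log (c0 / (w / (1 + β))) < c0 / (w / (1 + β)) - 1 :=
      Real.log_lt_sub_one_of_pos (by positivity)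
        (by simp [div_eq_one_iff_eq hc0s.ne']; exact hne)
    have h2 : Real.log (c1 / (R * β * w / (1 + β))) ≤ c1 / (R * β * w / (1 + β)) - 1 :=
      Real.log_le_sub_one_of_pos (by positivity)
    rw [Real.log_div hc0.ne' hc0s.ne'] at h1
    rw [Real.log_div hc1.ne' hc1s.ne'] at h2
    nlinarith [mul_le_mul_of_nonneg_left h2 hβ.le]
  · have h1 : Real.log (c0 / (w / (1 + β))) ≤ c0 / (w / (1 + β)) - 1 :=
      Real.log_le_sub_one_of_pos (by positivity)
    have h2 : Real.log (c1 / (R * β * w / (1 + β))) < c1 / (R * β * w / (1 + β)) - 1 :=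
      Real.log_lt_sub_one_of_pos (by positivity)
        (by simp [div_eq_one_iff_eq hc1s.ne']; exact hne)
    rw [Real.log_div hc0.ne' hc0s.ne'] at h1
    rw [Real.log_div hc1.ne' hc1s.ne'] at h2
    nlinarith [mul_lt_mul_of_pos_left h2 hβ]

-- feasible plans satisfy R*c0 + c1 ≤ R*w when A ≤ R
lemma feas_red {A R w c0 c1 k b : ℝ} (hR : 0 < R) (hAR : A ≤ R) (hk : 0 ≤ k)
    (h0 : c0 + k ≤ (1 - 0) * w + b + 0 * (0:ℝ))
    (h1 : c1 ≤ (1 - 0) * A * k - R * b + 0 * (0:ℝ)) :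
    R * c0 + c1 ≤ R * w := by
  have hAk : A * k ≤ R * k := mul_le_mul_of_nonneg_right hAR hk
  have h0' : c0 + k ≤ w + b := by linarith
  nlinarith [mul_le_mul_of_nonneg_left h0' hR.le]

lemma logOpt {β w R A k b : ℝ} (hβ : 0 < β) (hw : 0 < w) (hR : 0 < R)
    (hAR : A ≤ R) (hk : 0 ≤ k)
    (hb0 : w / (1 + β) + k ≤ w + b)
    (hb1 : R * β * w / (1 + β) ≤ A * k - R * b) :
    LogAgentOptimal β w 0 0 0 0 A R 0 0 (w / (1 + β)) (R * β * w / (1 + β)) k b := by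
  have h1β : (0:ℝ) < 1 + β := by linarith
  refine ⟨⟨by positivity, by positivity, hk, by norm_num; linarith, by norm_num; linarith⟩,
    fun c0' c1' k' b' hc0' hc1' hk' h0' h1' => ?_⟩
  exact log_bound hβ hw hR hc0' hc1' (feas_red hR hAR hk' h0' h1')

lemma noOpt {β w R A c0 c1 k b : ℝ} (hβ : 0 < β)
    (h : LogAgentOptimal β w 0 0 0 0 A R 0 0 c0 c1 k b) (hRA : R < A) : False := by
  obtain ⟨⟨hc0, hc1, hk, hb0, hb1⟩, hopt⟩ := h
  have := hopt c0 (c1 + (A - R)) (k + 1) (b + 1) hc0 (by linarith) (by linarith)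
    (by norm_num at hb0 ⊢; linarith) (by norm_num at hb1 ⊢; linarith)
  have hl : Real.log c1 < Real.log (c1 + (A - R)) := Real.log_lt_log hc1 (by linarith)
  nlinarith

lemma kzero {β w R A c0 c1 k b : ℝ} (hβ : 0 < β)
    (h : LogAgentOptimal β w 0 0 0 0 A R 0 0 c0 c1 k b) (hRA : A < R) : k = 0 := by
  obtain ⟨⟨hc0, hc1, hk, hb0, hb1⟩, hopt⟩ := h
  rcases hk.eq_or_lt with hk0 | hk0
  · exact hk0.symm
  exfalso
  have := hopt c0 (c1 + (R - A) * k) 0 (b - k) hc0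
    (by nlinarith) le_rfl
    (by norm_num at hb0 ⊢; linarith) (by norm_num at hb1 ⊢; nlinarith)
  have hl : Real.log c1 < Real.log (c1 + (R - A) * k) :=
    Real.log_lt_log hc1 (by nlinarith)
  nlinarith

lemma optUnique {β w R A c0 c1 k b : ℝ} (hβ : 0 < β) (hw : 0 < w) (hR : 0 < R)
    (hAR : A ≤ R) (h : LogAgentOptimal β w 0 0 0 0 A R 0 0 c0 c1 k b) :
    c0 = w / (1 + β) ∧ c1 = R * β * w / (1 + β) := by
  have h1β : (0:ℝ) < 1 + β := by linarith
  obtain ⟨⟨hc0, hc1, hk, hb0, hb1⟩, hopt⟩ := h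
  have hfeas : R * c0 + c1 ≤ R * w := feas_red hR hAR hk hb0 hb1
  have hval := hopt (w / (1 + β)) (R * β * w / (1 + β)) 0 (-(β * w / (1 + β)))
    (by positivity) (by positivity) le_rfl
    (by norm_num; rw [div_add_div _ _ h1β.ne' h1β.ne']; rw [div_le_iff₀ (by positivity)]; nlinarith)
    (by norm_num; rw [div_le_iff₀ (by positivity)]; field_simp; ring_nf; nlinarith)
  by_contra hne
  have : c0 ≠ w / (1 + β) ∨ c1 ≠ R * β * w / (1 + β) := by tauto
  have := log_bound_strict hβ hw hR hc0 hc1 hfeas this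
  linarith

lemma symm_eq {w1 w2 β1 β2 A1 A2 c10 c11 k1 b1 c20 c21 k2 b2 R : ℝ}
    (h : TwoAgentEq w1 w2 β1 β2 A1 A2 0 0 0 0 0 0 0 0 0 0
      c10 c11 k1 b1 c20 c21 k2 b2 R) :
    TwoAgentEq w2 w1 β2 β1 A2 A1 0 0 0 0 0 0 0 0 0 0
      c20 c21 k2 b2 c10 c11 k1 b1 R := by
  obtain ⟨hR, h1, h2, hb, m0, m1⟩ := h
  exact ⟨hR, h2, h1, by linarith, by linarith, by linarith⟩

lemma exist {w1 w2 β1 β2 A1 A2 : ℝ}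
    (hw1 : 0 < w1) (hw2 : 0 < w2) (hβ1 : 0 < β1) (hβ2 : 0 < β2)
    (hA1 : 0 < A1) (hA : A2 ≤ A1) :
    TwoAgentEq w1 w2 β1 β2 A1 A2 0 0 0 0 0 0 0 0 0 0
      (w1 / (1 + β1)) (A1 * β1 * w1 / (1 + β1))
      (β1 * w1 / (1 + β1) + β2 * w2 / (1 + β2)) (β2 * w2 / (1 + β2))
      (w2 / (1 + β2)) (A1 * β2 * w2 / (1 + β2))
      0 (-(β2 * w2 / (1 + β2))) A1 := by
  have h1β1 : (0:ℝ) < 1 + β1 := by linarith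
  have h1β2 : (0:ℝ) < 1 + β2 := by linarith
  refine ⟨hA1, ?_, ?_, by ring, ?_, ?_⟩
  · exact logOpt hβ1 hw1 hA1 le_rfl (by positivity)
      (by have : w1 / (1 + β1) + β1 * w1 / (1 + β1) = w1 := by field_simp
          linarith)
      (by have : A1 * (β1 * w1 / (1 + β1) + β2 * w2 / (1 + β2)) - A1 * (β2 * w2 / (1 + β2))
              = A1 * β1 * w1 / (1 + β1) := by ring
          linarith [this.ge])
  · exact logOpt hβ2 hw2 hA1 hA le_rfl
      (by have : w2 + -(β2 * w2 / (1 + β2)) = w2 / (1 + β2) := by field_simp; ring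
          simp [this])
      (by have : A2 * 0 - A1 * -(β2 * w2 / (1 + β2)) = A1 * β2 * w2 / (1 + β2) := by ring
          linarith [this.ge])
  · norm_num; field_simp; ring
  · norm_num; field_simp

lemma char {w1 w2 β1 β2 A1 A2 c10 c11 k1 b1 c20 c21 k2 b2 R : ℝ}
    (hw1 : 0 < w1) (hw2 : 0 < w2) (hβ1 : 0 < β1) (hβ2 : 0 < β2)
    (hAlt : A2 < A1)
    (h : TwoAgentEq w1 w2 β1 β2 A1 A2 0 0 0 0 0 0 0 0 0 0
      c10 c11 k1 b1 c20 c21 k2 b2 R) :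
    R = A1 ∧ c10 = w1 / (1 + β1) ∧ c11 = A1 * β1 * w1 / (1 + β1) ∧
    c20 = w2 / (1 + β2) ∧ c21 = A1 * β2 * w2 / (1 + β2) ∧
    k1 = β1 * w1 / (1 + β1) + β2 * w2 / (1 + β2) ∧ k2 = 0 ∧
    b1 = β2 * w2 / (1 + β2) ∧ b2 = -(β2 * w2 / (1 + β2)) := by
  have h1β1 : (0:ℝ) < 1 + β1 := by linarith
  have h1β2 : (0:ℝ) < 1 + β2 := by linarith
  obtain ⟨hR, h1, h2, hb, m0, m1⟩ := h
  have hRA1 : A1 ≤ R := by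
    by_contra hc; exact noOpt hβ1 h1 (lt_of_not_ge hc)
  have hReq : R = A1 := by
    by_contra hc
    have hk1 : k1 = 0 := kzero hβ1 h1 (lt_of_le_of_ne hRA1 (Ne.symm hc))
    have hk2 : k2 = 0 := kzero hβ2 h2 (by linarith [lt_of_le_of_ne hRA1 (Ne.symm hc)])
    have hc11 := h1.1.2.1
    have hc21 := h2.1.2.1
    norm_num [hk1, hk2] at m1
    linarith
  subst hReq
  obtain ⟨e10, e11⟩ := optUnique hβ1 hw1 hR le_rfl h1
  obtain ⟨e20, e21⟩ := optUnique hβ2 hw2 hR hAlt.le h2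
  have hk2 : k2 = 0 := kzero hβ2 h2 hAlt
  have e11' : c11 = R * β1 * w1 / (1 + β1) := by rw [e11]
  have e21' : c21 = R * β2 * w2 / (1 + β2) := by rw [e21]
  have ek1 : k1 = β1 * w1 / (1 + β1) + β2 * w2 / (1 + β2) := by
    norm_num at m0
    rw [e10, e20, hk2] at m0
    have hw1' : w1 - w1 / (1 + β1) = β1 * w1 / (1 + β1) := by field_simp; ring
    have hw2' : w2 - w2 / (1 + β2) = β2 * w2 / (1 + β2) := by field_simp; ring
    linarith
  -- pin down b1, b2
  have hcon1 := h1.1.2.2.2.2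
  have hcon2 := h2.1.2.2.2.2
  norm_num [hk2] at hcon1 hcon2
  -- hcon1 : c11 ≤ R * k1 - R * b1 ; hcon2 : c21 ≤ -(R * b2)
  have key : R * b1 ≤ R * (β2 * w2 / (1 + β2)) := by
    have : R * k1 - c11 = R * (β2 * w2 / (1 + β2)) := by
      rw [ek1, e11']; ring
    linarith
  have key2 : R * (β2 * w2 / (1 + β2)) ≤ R * b1 := by
    have hb1 : b1 = -b2 := by linarith
    have : c21 = R * (β2 * w2 / (1 + β2)) := by rw [e21']; ring
    rw [hb1]; linarith
  have eb1 : b1 = β2 * w2 / (1 + β2) :=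
    (mul_left_cancel₀ hR.ne' (le_antisymm key key2).symm).symm
  exact ⟨rfl, e10, e11', e20, e21', ek1, hk2, eb1, by linarith⟩

end NoInterventionAux

/-- Lemma 4.1: equilibrium without intervention:
in the two-agent log-linear economy without intervention (all taxes, transfers
and public investment zero, so `T0 = T1 = D0 = 0`), if `A1 ≠ A2` then there
exists a unique equilibrium; in it `R = max A1 A2`, only the agent with the
higher productivity invests, aggregate capital equals
`K1* = β2 w2/(1+β2) + β1 w1/(1+β1)`, and date-1 output equals
`Y1* = (β2 w2/(1+β2) + β1 w1/(1+β1)) · max A1 A2`. -/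
theorem no_intervention_equilibrium (w1 w2 β1 β2 A1 A2 : ℝ)
    (hw1 : 0 < w1) (hw2 : 0 < w2)
    (hβ1 : β1 ∈ Set.Ioo (0 : ℝ) 1) (hβ2 : β2 ∈ Set.Ioo (0 : ℝ) 1)
    (hA1 : 0 < A1) (hA2 : 0 < A2) (hA : A1 ≠ A2) :
    (∃! e : ℝ × ℝ × ℝ × ℝ × ℝ × ℝ × ℝ × ℝ × ℝ,
      TwoAgentEq w1 w2 β1 β2 A1 A2 0 0 0 0 0 0 0 0 0 0
        e.1 e.2.1 e.2.2.1 e.2.2.2.1 e.2.2.2.2.1 e.2.2.2.2.2.1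
        e.2.2.2.2.2.2.1 e.2.2.2.2.2.2.2.1 e.2.2.2.2.2.2.2.2) ∧
    ∀ c10 c11 k1 b1 c20 c21 k2 b2 R : ℝ,
      TwoAgentEq w1 w2 β1 β2 A1 A2 0 0 0 0 0 0 0 0 0 0
        c10 c11 k1 b1 c20 c21 k2 b2 R →
      R = max A1 A2 ∧
      (A1 < A2 → k1 = 0) ∧ (A2 < A1 → k2 = 0) ∧
      k1 + k2 = β2 / (1 + β2) * w2 + β1 / (1 + β1) * w1 ∧
      A1 * k1 + A2 * k2 =
        (β2 / (1 + β2) * w2 + β1 / (1 + β1) * w1) * max A1 A2 := by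
  obtain ⟨hβ1p, hβ1l⟩ := hβ1
  obtain ⟨hβ2p, hβ2l⟩ := hβ2
  rcases hA.lt_or_gt with hlt | hlt
  · -- A1 < A2 : agent 2 is productive
    constructor
    · refine ⟨(w1 / (1 + β1), A2 * β1 * w1 / (1 + β1), 0, -(β1 * w1 / (1 + β1)),
        w2 / (1 + β2), A2 * β2 * w2 / (1 + β2),
        β2 * w2 / (1 + β2) + β1 * w1 / (1 + β1), β1 * w1 / (1 + β1), A2),
        symm_eq (exist hw2 hw1 hβ2p hβ1p hA2 hlt.le), ?_⟩
      rintro ⟨c10, c11, k1, b1, c20, c21, k2, b2, R⟩ he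
      obtain ⟨eR, e20, e21, e10, e11, ek2, ek1, eb2, eb1⟩ :=
        char hw2 hw1 hβ2p hβ1p hlt (symm_eq he)
      exact Prod.ext e10 (Prod.ext e11 (Prod.ext ek1 (Prod.ext eb1 (Prod.ext e20
        (Prod.ext e21 (Prod.ext ek2 (Prod.ext eb2 eR)))))))
    · intro c10 c11 k1 b1 c20 c21 k2 b2 R he
      obtain ⟨eR, e20, e21, e10, e11, ek2, ek1, eb2, eb1⟩ :=
        char hw2 hw1 hβ2p hβ1p hlt (symm_eq he)
      rw [max_eq_right hlt.le]
      refine ⟨eR, fun _ => ek1, fun hc => absurd hc (not_lt.mpr hlt.le), ?_, ?_⟩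
      · rw [ek1, ek2]; ring
      · rw [ek1, ek2]; ring
  · -- A2 < A1 : agent 1 is productive
    constructor
    · refine ⟨(w1 / (1 + β1), A1 * β1 * w1 / (1 + β1),
        β1 * w1 / (1 + β1) + β2 * w2 / (1 + β2), β2 * w2 / (1 + β2),
        w2 / (1 + β2), A1 * β2 * w2 / (1 + β2), 0, -(β2 * w2 / (1 + β2)), A1),
        exist hw1 hw2 hβ1p hβ2p hA1 hlt.le, ?_⟩
      rintro ⟨c10, c11, k1, b1, c20, c21, k2, b2, R⟩ he
      obtain ⟨eR, e10, e11, e20, e21, ek1, ek2, eb1, eb2⟩ :=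
        char hw1 hw2 hβ1p hβ2p hlt he
      exact Prod.ext e10 (Prod.ext e11 (Prod.ext ek1 (Prod.ext eb1 (Prod.ext e20
        (Prod.ext e21 (Prod.ext ek2 (Prod.ext eb2 eR)))))))
    · intro c10 c11 k1 b1 c20 c21 k2 b2 R he
      obtain ⟨eR, e10, e11, e20, e21, ek1, ek2, eb1, eb2⟩ :=
        char hw1 hw2 hβ1p hβ2p hlt he
      rw [max_eq_left hlt.le]
      refine ⟨eR, fun hc => absurd hc (not_lt.mpr hlt.le), fun _ => ek2, ?_, ?_⟩
      · rw [ek1, ek2]; ring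
      · rw [ek1, ek2]; ring
end

section
/- In the two-agent log-linear economy with policy (τ_{i,t}, γ_{i,t}, γ_{d,0}), set T_0 = τ_{1,0}w_{1,0} + τ_{2,0}w_{2,0} and suppose (1−τ_{2,1})(1 + a_2 γ_{d,0}T_0)A_2 > (1−τ_{1,1})(1 + a_1 γ_{d,0}T_0)A_1. Then there exists a unique political-economic equilibrium; in it, k_{1,1} = 0 and aggregate capital is K_1 = k_{2,1} = [β_2((1−τ_{2,0})w_{2,0} + γ_{2,0}T_0)/(1+β_2) + β_1((1−τ_{1,0})w_{1,0} + γ_{1,0}T_0)/(1+β_1)] / [1 + (γ_{2,1}/(1+β_2) + γ_{1,1}/(1+β_1))·τ_{2,1}/(1−τ_{2,1})], with interest rate R_1 = (1−τ_{2,1})(1 + a_2 γ_{d,0}T_0)A_2. -/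
open Set

section Helpers

private lemma log_sub_bound {x y : ℝ} (hx : 0 < x) (hy : 0 < y) :
    Real.log x - Real.log y ≤ x / y - 1 := by
  rw [← Real.log_div hx.ne' hy.ne']
  exact Real.log_le_sub_one_of_pos (div_pos hx hy)

private lemma log_sub_bound_strict {x y : ℝ} (hx : 0 < x) (hy : 0 < y) (hne : x ≠ y) :
    Real.log x - Real.log y < x / y - 1 := by
  rw [← Real.log_div hx.ne' hy.ne']
  refine Real.log_lt_sub_one_of_pos (div_pos hx hy) ?_
  intro h
  exact hne ((div_eq_one_iff_eq hy.ne').mp h)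

private lemma key_ineq {β R c0 c1 c0' c1' : ℝ} (hβ : 0 < β) (hR : 0 < R)
    (hc0 : 0 < c0) (hfoc : c1 = R * β * c0)
    (hbud : R * c0' + c1' ≤ R * c0 + c1) :
    (c0' / c0 - 1) + β * (c1' / c1 - 1) ≤ 0 := by
  have h : (c0' / c0 - 1) + β * (c1' / c1 - 1)
      = ((R * c0' + c1') - (R * c0 + c1)) / (R * c0) := by
    rw [hfoc]; field_simp; ring
  rw [h]
  exact div_nonpos_of_nonpos_of_nonneg (by linarith) (by positivity)

private lemma log_opt {β R c0 c1 c0' c1' : ℝ} (hβ : 0 < β) (hR : 0 < R)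
    (hc0 : 0 < c0) (hc0' : 0 < c0') (hc1' : 0 < c1')
    (hfoc : c1 = R * β * c0)
    (hbud : R * c0' + c1' ≤ R * c0 + c1) :
    Real.log c0' + β * Real.log c1' ≤ Real.log c0 + β * Real.log c1 := by
  have hc1 : 0 < c1 := by rw [hfoc]; positivity
  have e1 := log_sub_bound hc0' hc0
  have e2 := log_sub_bound hc1' hc1
  have key := key_ineq hβ hR hc0 hfoc hbud
  nlinarith [mul_le_mul_of_nonneg_left e2 hβ.le]

private lemma log_opt_unique {β R c0 c1 c0' c1' : ℝ} (hβ : 0 < β) (hR : 0 < R)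
    (hc0 : 0 < c0) (hc0' : 0 < c0') (hc1' : 0 < c1')
    (hfoc : c1 = R * β * c0)
    (hbud : R * c0' + c1' ≤ R * c0 + c1)
    (hge : Real.log c0 + β * Real.log c1 ≤ Real.log c0' + β * Real.log c1') :
    c0' = c0 ∧ c1' = c1 := by
  have hc1 : 0 < c1 := by rw [hfoc]; positivity
  have key := key_ineq hβ hR hc0 hfoc hbud
  have h0 : c0' = c0 := by
    by_contra hne
    have e1 := log_sub_bound_strict hc0' hc0 hne
    have e2 := log_sub_bound hc1' hc1
    nlinarith [mul_le_mul_of_nonneg_left e2 hβ.le]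
  subst h0
  refine ⟨rfl, ?_⟩
  by_contra hne
  have e1 := log_sub_bound hc0' hc0
  have e2 := log_sub_bound_strict hc1' hc1 hne
  nlinarith [mul_lt_mul_of_pos_left e2 hβ]

private lemma fix_identity {β1 β2 τ21 γ11 γ21 W10 W20 K : ℝ}
    (hb1p : (0:ℝ) < 1 + β1) (hb2p : (0:ℝ) < 1 + β2) (hτ : (0:ℝ) < 1 - τ21)
    (hKeq : K * (1 + (γ21 / (1 + β2) + γ11 / (1 + β1)) * (τ21 / (1 - τ21)))
      = β2 * W20 / (1 + β2) + β1 * W10 / (1 + β1)) :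
    (W10 + γ11 * τ21 * K / (1 - τ21)) / (1 + β1)
      + (W20 + γ21 * τ21 * K / (1 - τ21)) / (1 + β2) + K = W10 + W20 := by
  field_simp at hKeq
  have pk : K * ((1 + β2) * (1 + β1) * (1 - τ21) + (γ21 * (1 + β1) + γ11 * (1 + β2)) * τ21)
      = (β2 * W20 * (1 + β1) + β1 * W10 * (1 + β2)) * (1 - τ21) := by
    apply mul_right_cancel₀ (show ((1 + β2) * (1 + β1)) ≠ 0 by positivity)
    linear_combination ((1 + β2) * (1 + β1)) * hKeq
  field_simp
  linear_combination pk

private lemma agent_opt {β w τ0 τ1 γ0 γ1 Aeff R T0 T1 c0 c1 k b : ℝ}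
    (hβ : 0 < β) (hR : 0 < R) (hret : (1 - τ1) * Aeff ≤ R)
    (hc0 : 0 < c0) (hk : 0 ≤ k)
    (hfoc : c1 = R * β * c0)
    (hcap : (1 - τ1) * Aeff * k = R * k)
    (hbud0 : c0 + k = (1 - τ0) * w + b + γ0 * T0)
    (hbud1 : c1 = (1 - τ1) * Aeff * k - R * b + γ1 * T1) :
    LogAgentOptimal β w τ0 τ1 γ0 γ1 Aeff R T0 T1 c0 c1 k b := by
  have hc1 : 0 < c1 := by rw [hfoc]; positivity
  refine ⟨⟨hc0, hc1, hk, le_of_eq hbud0, le_of_eq hbud1⟩, ?_⟩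
  intro c0' c1' k' b' hc0' hc1' hk' hb0' hb1'
  apply log_opt hβ hR hc0 hc0' hc1' hfoc
  have hcap' : (1 - τ1) * Aeff * k' ≤ R * k' :=
    mul_le_mul_of_nonneg_right hret hk'
  have h5 : R * c0 + c1 = R * ((1 - τ0) * w + γ0 * T0) + γ1 * T1 := by
    linear_combination R * hbud0 + hbud1 + hcap
  have h6 := mul_le_mul_of_nonneg_left hb0' hR.le
  nlinarith [h5, h6, hb1', hcap']

private lemma agent_ret {β w τ0 τ1 γ0 γ1 Aeff R T0 T1 c0 c1 k b : ℝ}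
    (hβ : 0 < β)
    (hopt : LogAgentOptimal β w τ0 τ1 γ0 γ1 Aeff R T0 T1 c0 c1 k b) :
    (1 - τ1) * Aeff ≤ R := by
  by_contra h
  push_neg at h
  obtain ⟨⟨hc0, hc1, hk, hb0, hb1⟩, ho⟩ := hopt
  have hf := ho c0 (c1 + ((1 - τ1) * Aeff - R)) (k + 1) (b + 1) hc0
    (by linarith) (by linarith) (by linarith) (by nlinarith)
  have hlog := Real.log_lt_log hc1
    (show c1 < c1 + ((1 - τ1) * Aeff - R) by linarith)
  nlinarith [mul_lt_mul_of_pos_left hlog hβ]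

private lemma agent_char {β w τ0 τ1 γ0 γ1 Aeff R T0 T1 c0 c1 k b : ℝ}
    (hβ : 0 < β) (hR : 0 < R) (hret : (1 - τ1) * Aeff ≤ R)
    (hW0 : 0 < (1 - τ0) * w + γ0 * T0) (hm : 0 ≤ γ1 * T1)
    (hopt : LogAgentOptimal β w τ0 τ1 γ0 γ1 Aeff R T0 T1 c0 c1 k b) :
    c0 = ((1 - τ0) * w + γ0 * T0 + γ1 * T1 / R) / (1 + β) ∧
    c1 = R * β * c0 ∧
    c0 + k = (1 - τ0) * w + b + γ0 * T0 ∧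
    ((1 - τ1) * Aeff < R → k = 0) := by
  obtain ⟨⟨hc0, hc1, hk, hb0, hb1⟩, ho⟩ := hopt
  have hβ1 : (0:ℝ) < 1 + β := by linarith
  have hbind1 : c1 = (1 - τ1) * Aeff * k - R * b + γ1 * T1 := by
    rcases eq_or_lt_of_le hb1 with h | h
    · exact h
    · exfalso
      have hf := ho c0 ((1 - τ1) * Aeff * k - R * b + γ1 * T1) k b hc0
        (lt_trans hc1 h) hk hb0 le_rfl
      have hlog := Real.log_lt_log hc1 h
      nlinarith [mul_lt_mul_of_pos_left hlog hβ]
  have hbind0 : c0 + k = (1 - τ0) * w + b + γ0 * T0 := by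
    rcases eq_or_lt_of_le hb0 with h | h
    · exact h
    · exfalso
      have hc0' : c0 < (1 - τ0) * w + b + γ0 * T0 - k := by linarith
      have hf := ho ((1 - τ0) * w + b + γ0 * T0 - k) c1 k b
        (lt_trans hc0 hc0') hc1 hk (by linarith) hb1
      have hlog := Real.log_lt_log hc0 hc0'
      nlinarith
  set W : ℝ := (1 - τ0) * w + γ0 * T0 + γ1 * T1 / R with hWdef
  have hW : 0 < W := by
    have : 0 ≤ γ1 * T1 / R := div_nonneg hm hR.le
    simp only [hWdef]; linarith
  have hcs : 0 < W / (1 + β) := div_pos hW hβ1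
  have hc1s : 0 < R * β * (W / (1 + β)) := by positivity
  have hge := ho (W / (1 + β)) (R * β * (W / (1 + β))) 0
    (W / (1 + β) - ((1 - τ0) * w + γ0 * T0)) hcs hc1s le_rfl
    (by simp only [hWdef]; ring_nf; linarith)
    (by
      have : R * β * (W / (1 + β)) = (1 - τ1) * Aeff * 0
          - R * (W / (1 + β) - ((1 - τ0) * w + γ0 * T0)) + γ1 * T1 := by
        simp only [hWdef]; field_simp; ring
      linarith [this.le])
  have hbud : R * c0 + c1 ≤ R * (W / (1 + β)) + R * β * (W / (1 + β)) := by
    have hrhs : R * (W / (1 + β)) + R * β * (W / (1 + β)) = R * W := by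
      field_simp
    rw [hrhs]
    have hcapk : (1 - τ1) * Aeff * k ≤ R * k := mul_le_mul_of_nonneg_right hret hk
    have hRW2 : R * W = R * ((1 - τ0) * w + γ0 * T0) + γ1 * T1 := by
      simp only [hWdef]; field_simp
    nlinarith [mul_le_mul_of_nonneg_left hbind0.le hR.le]
  obtain ⟨hec0, hec1⟩ := log_opt_unique hβ hR hcs hc0 hc1 rfl hbud hge
  refine ⟨hec0, by rw [hec1, hec0], hbind0, ?_⟩
  intro hstrict
  by_contra hkne
  have hkpos : 0 < k := lt_of_le_of_ne hk (Ne.symm hkne)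
  have hgain : 0 < (R - (1 - τ1) * Aeff) * k := by
    apply mul_pos (by linarith) hkpos
  have hf := ho c0 (c1 + (R - (1 - τ1) * Aeff) * k) 0 (b - k) hc0
    (by linarith) le_rfl (by linarith [hbind0]) (by nlinarith [hbind1])
  have hlog := Real.log_lt_log hc1 (by linarith : c1 < c1 + (R - (1 - τ1) * Aeff) * k)
  nlinarith [mul_lt_mul_of_pos_left hlog hβ]

private lemma eq_char
    {w1 w2 β1 β2 A1e A2e τ10 τ20 τ11 τ21 γ10 γ20 γ11 γ21 T0 : ℝ}
    {c10 c11 k1 b1 c20 c21 k2 b2 R : ℝ}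
    (hβ1 : 0 < β1) (hβ2 : 0 < β2)
    (hA1e : 0 < A1e) (hA2e : 0 < A2e)
    (hτ11 : 0 ≤ τ11) (hτ21 : 0 ≤ τ21) (hτ21' : τ21 < 1)
    (hγ11 : 0 ≤ γ11) (hγ21 : 0 ≤ γ21)
    (hW10 : 0 < (1 - τ10) * w1 + γ10 * T0)
    (hW20 : 0 < (1 - τ20) * w2 + γ20 * T0)
    (hgap : (1 - τ11) * A1e < (1 - τ21) * A2e)
    (heq : TwoAgentEq w1 w2 β1 β2 A1e A2e τ10 τ20 τ11 τ21 γ10 γ20 γ11 γ21 T0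
      (τ11 * A1e * k1 + τ21 * A2e * k2) c10 c11 k1 b1 c20 c21 k2 b2 R) :
    R = (1 - τ21) * A2e ∧ k1 = 0 ∧
    (k2 * (1 + (γ21 / (1 + β2) + γ11 / (1 + β1)) * (τ21 / (1 - τ21)))
      = β2 * ((1 - τ20) * w2 + γ20 * T0) / (1 + β2)
        + β1 * ((1 - τ10) * w1 + γ10 * T0) / (1 + β1)) ∧
    c10 = ((1 - τ10) * w1 + γ10 * T0 + γ11 * (τ21 * A2e * k2) / R) / (1 + β1) ∧
    c11 = R * β1 * c10 ∧
    c20 = ((1 - τ20) * w2 + γ20 * T0 + γ21 * (τ21 * A2e * k2) / R) / (1 + β2) ∧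
    c21 = R * β2 * c20 ∧
    b1 = c10 - ((1 - τ10) * w1 + γ10 * T0) ∧
    b2 = c20 + k2 - ((1 - τ20) * w2 + γ20 * T0) := by
  obtain ⟨hR, ho1, ho2, hbond, hcl0, hcl1⟩ := heq
  have hret1 := agent_ret hβ1 ho1
  have hret2 := agent_ret hβ2 ho2
  have hk1 : 0 ≤ k1 := ho1.1.2.2.1
  have hk2 : 0 ≤ k2 := ho2.1.2.2.1
  have hc11 : 0 < c11 := ho1.1.2.1
  have hc21 : 0 < c21 := ho2.1.2.1
  have hT1 : 0 ≤ τ11 * A1e * k1 + τ21 * A2e * k2 :=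
    add_nonneg (mul_nonneg (mul_nonneg hτ11 hA1e.le) hk1)
      (mul_nonneg (mul_nonneg hτ21 hA2e.le) hk2)
  have hchar1 := agent_char hβ1 hR hret1 hW10 (mul_nonneg hγ11 hT1) ho1
  have hchar2 := agent_char hβ2 hR hret2 hW20 (mul_nonneg hγ21 hT1) ho2
  have hReq : R = (1 - τ21) * A2e := by
    rcases eq_or_lt_of_le hret2 with h | h
    · exact h.symm
    · exfalso
      have hk2z := hchar2.2.2.2 h
      have hk1z := hchar1.2.2.2 (lt_trans hgap h)
      rw [hk1z, hk2z] at hcl1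
      simp at hcl1
      linarith
  have hk1z : k1 = 0 := hchar1.2.2.2 (by rw [hReq]; exact hgap)
  subst hk1z
  have hT1eq : τ11 * A1e * 0 + τ21 * A2e * k2 = τ21 * A2e * k2 := by ring
  rw [hT1eq] at hchar1 hchar2
  have hc10 := hchar1.1
  have hc20 := hchar2.1
  refine ⟨hReq, rfl, ?_, hc10, hchar1.2.1, hc20, hchar2.2.1,
    by linarith [hchar1.2.2.1], by linarith [hchar2.2.2.1]⟩
  have hb1 : (0:ℝ) < 1 + β1 := by linarith
  have hb2 : (0:ℝ) < 1 + β2 := by linarith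
  have hτ : (0:ℝ) < 1 - τ21 := by linarith
  have e : c10 + c20 + k2 = ((1 - τ10) * w1 + γ10 * T0) + ((1 - τ20) * w2 + γ20 * T0) := by
    linarith [hcl0]
  have hA2ne : A2e ≠ 0 := hA2e.ne'
  have hq1 : γ11 * (τ21 * A2e * k2) / R = γ11 * τ21 * k2 / (1 - τ21) := by
    rw [hReq]; field_simp
  have hq2 : γ21 * (τ21 * A2e * k2) / R = γ21 * τ21 * k2 / (1 - τ21) := by
    rw [hReq]; field_simp
  rw [hc10, hc20, hq1, hq2] at e
  field_simp at e
  have h2 : (1 - τ21) * (k2 * ((1 + β1) * (1 + β2) * (1 - τ21) +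
        (γ11 * (1 + β2) + γ21 * (1 + β1)) * τ21))
      = (1 - τ21) * ((β1 * ((1 - τ10) * w1 + γ10 * T0) * (1 + β2) +
        β2 * ((1 - τ20) * w2 + γ20 * T0) * (1 + β1)) * (1 - τ21)) := by
    linear_combination (1 - τ21) * e
  have hk2p := mul_left_cancel₀ hτ.ne' h2
  field_simp
  linear_combination hk2p

private lemma eq_exists
    {w1 w2 β1 β2 A1e A2e τ10 τ20 τ11 τ21 γ10 γ20 γ11 γ21 T0 K : ℝ}
    (hβ1 : 0 < β1) (hβ2 : 0 < β2)
    (hA2e : 0 < A2e)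
    (hτ21 : 0 ≤ τ21) (hτ21' : τ21 < 1)
    (hγ11 : 0 ≤ γ11) (hγ21 : 0 ≤ γ21)
    (hW10 : 0 < (1 - τ10) * w1 + γ10 * T0)
    (hW20 : 0 < (1 - τ20) * w2 + γ20 * T0)
    (hgap : (1 - τ11) * A1e < (1 - τ21) * A2e)
    (hK : 0 ≤ K)
    (hKeq : K * (1 + (γ21 / (1 + β2) + γ11 / (1 + β1)) * (τ21 / (1 - τ21)))
      = β2 * ((1 - τ20) * w2 + γ20 * T0) / (1 + β2)
        + β1 * ((1 - τ10) * w1 + γ10 * T0) / (1 + β1)) :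
    ∃ c10 c11 b1 c20 c21 b2 : ℝ,
      TwoAgentEq w1 w2 β1 β2 A1e A2e τ10 τ20 τ11 τ21 γ10 γ20 γ11 γ21 T0
        (τ11 * A1e * 0 + τ21 * A2e * K)
        c10 c11 0 b1 c20 c21 K b2 ((1 - τ21) * A2e) := by
  have hτ : (0:ℝ) < 1 - τ21 := by linarith
  have hb1p : (0:ℝ) < 1 + β1 := by linarith
  have hb2p : (0:ℝ) < 1 + β2 := by linarith
  set Rs : ℝ := (1 - τ21) * A2e with hRs
  have hRsp : 0 < Rs := mul_pos hτ hA2e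
  set T1s : ℝ := τ21 * A2e * K with hT1s
  have hT1sn : 0 ≤ T1s := mul_nonneg (mul_nonneg hτ21 hA2e.le) hK
  set W10 : ℝ := (1 - τ10) * w1 + γ10 * T0 with hW10d
  set W20 : ℝ := (1 - τ20) * w2 + γ20 * T0 with hW20d
  set W1 : ℝ := W10 + γ11 * T1s / Rs with hW1d
  set W2 : ℝ := W20 + γ21 * T1s / Rs with hW2d
  have hW1p : 0 < W1 := by
    have : 0 ≤ γ11 * T1s / Rs := by positivity
    simp only [hW1d]; linarith
  have hW2p : 0 < W2 := by
    have : 0 ≤ γ21 * T1s / Rs := by positivity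
    simp only [hW2d]; linarith
  set C10 : ℝ := W1 / (1 + β1) with hC10d
  set C20 : ℝ := W2 / (1 + β2) with hC20d
  have hC10p : 0 < C10 := div_pos hW1p hb1p
  have hC20p : 0 < C20 := div_pos hW2p hb2p
  have hfix : C10 + C20 + K = W10 + W20 := by
    have hq1 : γ11 * T1s / Rs = γ11 * τ21 * K / (1 - τ21) := by
      rw [hT1s, hRs]; field_simp
    have hq2 : γ21 * T1s / Rs = γ21 * τ21 * K / (1 - τ21) := by
      rw [hT1s, hRs]; field_simp
    rw [hC10d, hC20d, hW1d, hW2d, hq1, hq2]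
    exact fix_identity hb1p hb2p hτ hKeq
  refine ⟨C10, Rs * β1 * C10, C10 - W10, C20, Rs * β2 * C20, C20 + K - W20,
    hRsp, ?_, ?_, by linarith, by rw [hW10d, hW20d] at hfix; linarith, ?_⟩
  · refine agent_opt hβ1 hRsp (le_of_lt hgap) hC10p le_rfl rfl (by ring) (by
      rw [hW10d]; ring) ?_
    rw [hC10d, hW1d]
    field_simp
    ring
  · refine agent_opt hβ2 hRsp le_rfl hC20p hK rfl (by ring) (by
      rw [hW20d]; ring) ?_
    rw [hC20d, hW2d]
    field_simp
    ring
  · have hb11 : Rs * β1 * C10 = - Rs * (C10 - W10) + γ11 * T1s := by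
      rw [hC10d, hW1d]; field_simp; ring
    have hb12 : Rs * β2 * C20 = Rs * K - Rs * (C20 + K - W20) + γ21 * T1s := by
      rw [hC20d, hW2d]; field_simp; ring
    have hT1e : τ11 * A1e * 0 + τ21 * A2e * K = T1s := by rw [hT1s]; ring
    rw [hT1e]
    have : (1 - τ11) * A1e * 0 + (1 - τ21) * A2e * K = Rs * K := by rw [hRs]; ring
    rw [this]
    have hfz : Rs * (C10 + C20 + K) = Rs * (W10 + W20) := by rw [hfix]
    linarith [hb11, hb12, hfz]

end Helpers

/-- Proposition 4.1, part 1: in the two-agent log-linear economy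
with policy `(τᵢₜ, γᵢₜ, γd)`, set `T0 = τ10 w1 + τ20 w2` and suppose
`(1−τ21)(1 + a2 γd T0)A2 > (1−τ11)(1 + a1 γd T0)A1`.  Then there exists a unique
political-economic equilibrium; in it `k1 = 0`, aggregate capital is
`K1 = k2 = [β2((1−τ20)w2 + γ20 T0)/(1+β2) + β1((1−τ10)w1 + γ10 T0)/(1+β1)] /
[1 + (γ21/(1+β2) + γ11/(1+β1))·τ21/(1−τ21)]`, and the interest rate is
`R = (1−τ21)(1 + a2 γd T0)A2`. -/
theorem political_equilibrium_unique_capital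
    (w1 w2 β1 β2 A1 A2 a1 a2 τ10 τ20 τ11 τ21 γ10 γ20 γ11 γ21 γd T0 K1 : ℝ)
    (hw1 : 0 < w1) (hw2 : 0 < w2)
    (hβ1 : β1 ∈ Set.Ioo (0 : ℝ) 1) (hβ2 : β2 ∈ Set.Ioo (0 : ℝ) 1)
    (hA1 : 0 < A1) (hA2 : 0 < A2) (ha1 : 0 ≤ a1) (ha2 : 0 ≤ a2)
    (hτ10 : τ10 ∈ Set.Ico (0 : ℝ) 1) (hτ20 : τ20 ∈ Set.Ico (0 : ℝ) 1)
    (hτ11 : τ11 ∈ Set.Ico (0 : ℝ) 1) (hτ21 : τ21 ∈ Set.Ico (0 : ℝ) 1)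
    (hγ10 : γ10 ∈ Set.Icc (0 : ℝ) 1) (hγ20 : γ20 ∈ Set.Icc (0 : ℝ) 1)
    (hγ11 : γ11 ∈ Set.Icc (0 : ℝ) 1) (hγ21 : γ21 ∈ Set.Icc (0 : ℝ) 1)
    (hγd : γd ∈ Set.Icc (0 : ℝ) 1)
    (hsum0 : γ10 + γ20 + γd ≤ 1) (hsum1 : γ11 + γ21 ≤ 1)
    (hT0 : T0 = τ10 * w1 + τ20 * w2)
    (hgap : (1 - τ21) * (1 + a2 * (γd * T0)) * A2 >
            (1 - τ11) * (1 + a1 * (γd * T0)) * A1)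
    (hK1 : K1 = (β2 * ((1 - τ20) * w2 + γ20 * T0) / (1 + β2) +
                 β1 * ((1 - τ10) * w1 + γ10 * T0) / (1 + β1)) /
                (1 + (γ21 / (1 + β2) + γ11 / (1 + β1)) * (τ21 / (1 - τ21)))) :
    (∃! e : ℝ × ℝ × ℝ × ℝ × ℝ × ℝ × ℝ × ℝ × ℝ,
      TwoAgentPolEq w1 w2 β1 β2 A1 A2 a1 a2 τ10 τ20 τ11 τ21 γ10 γ20 γ11 γ21 γd
        e.1 e.2.1 e.2.2.1 e.2.2.2.1 e.2.2.2.2.1 e.2.2.2.2.2.1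
        e.2.2.2.2.2.2.1 e.2.2.2.2.2.2.2.1 e.2.2.2.2.2.2.2.2) ∧
    ∀ c10 c11 k1 b1 c20 c21 k2 b2 R : ℝ,
      TwoAgentPolEq w1 w2 β1 β2 A1 A2 a1 a2 τ10 τ20 τ11 τ21 γ10 γ20 γ11 γ21 γd
        c10 c11 k1 b1 c20 c21 k2 b2 R →
      k1 = 0 ∧ k2 = K1 ∧ R = (1 - τ21) * (1 + a2 * (γd * T0)) * A2 := by
  obtain ⟨hβ1p, hβ1l⟩ := hβ1
  obtain ⟨hβ2p, hβ2l⟩ := hβ2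
  obtain ⟨hτ10n, hτ10l⟩ := hτ10
  obtain ⟨hτ20n, hτ20l⟩ := hτ20
  obtain ⟨hτ11n, hτ11l⟩ := hτ11
  obtain ⟨hτ21n, hτ21l⟩ := hτ21
  subst hT0
  have hb1p : (0:ℝ) < 1 + β1 := by linarith
  have hb2p : (0:ℝ) < 1 + β2 := by linarith
  have hτp : (0:ℝ) < 1 - τ21 := by linarith
  have hT0n : 0 ≤ τ10 * w1 + τ20 * w2 :=
    add_nonneg (mul_nonneg hτ10n hw1.le) (mul_nonneg hτ20n hw2.le)
  have hA1e : 0 < A1 * (1 + a1 * (γd * (τ10 * w1 + τ20 * w2))) := by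
    have h : 0 ≤ a1 * (γd * (τ10 * w1 + τ20 * w2)) :=
      mul_nonneg ha1 (mul_nonneg hγd.1 hT0n)
    exact mul_pos hA1 (by linarith)
  have hA2e : 0 < A2 * (1 + a2 * (γd * (τ10 * w1 + τ20 * w2))) := by
    have h : 0 ≤ a2 * (γd * (τ10 * w1 + τ20 * w2)) :=
      mul_nonneg ha2 (mul_nonneg hγd.1 hT0n)
    exact mul_pos hA2 (by linarith)
  have hgap' : (1 - τ11) * (A1 * (1 + a1 * (γd * (τ10 * w1 + τ20 * w2)))) <
      (1 - τ21) * (A2 * (1 + a2 * (γd * (τ10 * w1 + τ20 * w2)))) := by nlinarith [hgap]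
  have hW10 : 0 < (1 - τ10) * w1 + γ10 * (τ10 * w1 + τ20 * w2) := by
    have h1 := mul_pos (show (0:ℝ) < 1 - τ10 by linarith) hw1
    have h2 := mul_nonneg hγ10.1 hT0n
    linarith
  have hW20 : 0 < (1 - τ20) * w2 + γ20 * (τ10 * w1 + τ20 * w2) := by
    have h1 := mul_pos (show (0:ℝ) < 1 - τ20 by linarith) hw2
    have h2 := mul_nonneg hγ20.1 hT0n
    linarith
  have hDpos : (0:ℝ) < 1 + (γ21 / (1 + β2) + γ11 / (1 + β1)) * (τ21 / (1 - τ21)) := by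
    have h1 : 0 ≤ γ21 / (1 + β2) := div_nonneg hγ21.1 hb2p.le
    have h2 : 0 ≤ γ11 / (1 + β1) := div_nonneg hγ11.1 hb1p.le
    have h3 : 0 ≤ τ21 / (1 - τ21) := div_nonneg hτ21n hτp.le
    nlinarith
  have hNpos : 0 < β2 * ((1 - τ20) * w2 + γ20 * (τ10 * w1 + τ20 * w2)) / (1 + β2) +
      β1 * ((1 - τ10) * w1 + γ10 * (τ10 * w1 + τ20 * w2)) / (1 + β1) := by
    have h1 := div_pos (mul_pos hβ2p hW20) hb2p
    have h2 := div_pos (mul_pos hβ1p hW10) hb1p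
    linarith
  have hK1eq : K1 * (1 + (γ21 / (1 + β2) + γ11 / (1 + β1)) * (τ21 / (1 - τ21)))
      = β2 * ((1 - τ20) * w2 + γ20 * (τ10 * w1 + τ20 * w2)) / (1 + β2) +
        β1 * ((1 - τ10) * w1 + γ10 * (τ10 * w1 + τ20 * w2)) / (1 + β1) := by
    rw [hK1]; exact div_mul_cancel₀ _ hDpos.ne'
  have hK1pos : 0 < K1 := by rw [hK1]; exact div_pos hNpos hDpos
  -- existence witness
  obtain ⟨c10, c11, b1, c20, c21, b2, heqE⟩ :=
    eq_exists hβ1p hβ2p hA2e hτ21n hτ21l hγ11.1 hγ21.1 hW10 hW20 hgap' hK1pos.le hK1eq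
  have hPolW : TwoAgentPolEq w1 w2 β1 β2 A1 A2 a1 a2 τ10 τ20 τ11 τ21 γ10 γ20 γ11 γ21 γd
      c10 c11 0 b1 c20 c21 K1 b2
      ((1 - τ21) * (A2 * (1 + a2 * (γd * (τ10 * w1 + τ20 * w2))))) := heqE
  -- characterization of any equilibrium
  have hchar : ∀ x10 x11 y1 z1 x20 x21 y2 z2 r : ℝ,
      TwoAgentPolEq w1 w2 β1 β2 A1 A2 a1 a2 τ10 τ20 τ11 τ21 γ10 γ20 γ11 γ21 γd
        x10 x11 y1 z1 x20 x21 y2 z2 r →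
      (x10, x11, y1, z1, x20, x21, y2, z2, r) =
      ((((1 - τ10) * w1 + γ10 * (τ10 * w1 + τ20 * w2) +
          γ11 * (τ21 * (A2 * (1 + a2 * (γd * (τ10 * w1 + τ20 * w2)))) * K1) /
            ((1 - τ21) * (A2 * (1 + a2 * (γd * (τ10 * w1 + τ20 * w2)))))) / (1 + β1)),
        (((1 - τ21) * (A2 * (1 + a2 * (γd * (τ10 * w1 + τ20 * w2))))) * β1 *
          (((1 - τ10) * w1 + γ10 * (τ10 * w1 + τ20 * w2) +
          γ11 * (τ21 * (A2 * (1 + a2 * (γd * (τ10 * w1 + τ20 * w2)))) * K1) /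
            ((1 - τ21) * (A2 * (1 + a2 * (γd * (τ10 * w1 + τ20 * w2)))))) / (1 + β1))),
        (0:ℝ),
        ((((1 - τ10) * w1 + γ10 * (τ10 * w1 + τ20 * w2) +
          γ11 * (τ21 * (A2 * (1 + a2 * (γd * (τ10 * w1 + τ20 * w2)))) * K1) /
            ((1 - τ21) * (A2 * (1 + a2 * (γd * (τ10 * w1 + τ20 * w2)))))) / (1 + β1))
          - ((1 - τ10) * w1 + γ10 * (τ10 * w1 + τ20 * w2))),
        (((1 - τ20) * w2 + γ20 * (τ10 * w1 + τ20 * w2) +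
          γ21 * (τ21 * (A2 * (1 + a2 * (γd * (τ10 * w1 + τ20 * w2)))) * K1) /
            ((1 - τ21) * (A2 * (1 + a2 * (γd * (τ10 * w1 + τ20 * w2)))))) / (1 + β2)),
        (((1 - τ21) * (A2 * (1 + a2 * (γd * (τ10 * w1 + τ20 * w2))))) * β2 *
          (((1 - τ20) * w2 + γ20 * (τ10 * w1 + τ20 * w2) +
          γ21 * (τ21 * (A2 * (1 + a2 * (γd * (τ10 * w1 + τ20 * w2)))) * K1) /
            ((1 - τ21) * (A2 * (1 + a2 * (γd * (τ10 * w1 + τ20 * w2)))))) / (1 + β2))),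
        K1,
        ((((1 - τ20) * w2 + γ20 * (τ10 * w1 + τ20 * w2) +
          γ21 * (τ21 * (A2 * (1 + a2 * (γd * (τ10 * w1 + τ20 * w2)))) * K1) /
            ((1 - τ21) * (A2 * (1 + a2 * (γd * (τ10 * w1 + τ20 * w2)))))) / (1 + β2))
          + K1 - ((1 - τ20) * w2 + γ20 * (τ10 * w1 + τ20 * w2))),
        ((1 - τ21) * (A2 * (1 + a2 * (γd * (τ10 * w1 + τ20 * w2)))))) := by
    intro x10 x11 y1 z1 x20 x21 y2 z2 r hpe
    obtain ⟨hR, hk1, hk2D, hx10, hx11, hx20, hx21, hz1, hz2⟩ :=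
      eq_char hβ1p hβ2p hA1e hA2e hτ11n hτ21n hτ21l hγ11.1 hγ21.1 hW10 hW20 hgap' hpe
    have hy2 : y2 = K1 := mul_right_cancel₀ hDpos.ne' (hk2D.trans hK1eq.symm)
    subst hy2
    subst hR
    subst hk1
    rw [hx10] at hx11 hz1
    rw [hx20] at hx21 hz2
    subst hx10; subst hx20; subst hx11; subst hx21; subst hz1; subst hz2
    rfl
  constructor
  · refine ⟨(c10, c11, 0, b1, c20, c21, K1, b2,
      ((1 - τ21) * (A2 * (1 + a2 * (γd * (τ10 * w1 + τ20 * w2)))))), hPolW, ?_⟩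
    intro y hy
    have h1 := hchar y.1 y.2.1 y.2.2.1 y.2.2.2.1 y.2.2.2.2.1 y.2.2.2.2.2.1
      y.2.2.2.2.2.2.1 y.2.2.2.2.2.2.2.1 y.2.2.2.2.2.2.2.2 hy
    have h2 := hchar c10 c11 0 b1 c20 c21 K1 b2
      ((1 - τ21) * (A2 * (1 + a2 * (γd * (τ10 * w1 + τ20 * w2))))) hPolW
    calc y = (y.1, y.2.1, y.2.2.1, y.2.2.2.1, y.2.2.2.2.1, y.2.2.2.2.2.1,
        y.2.2.2.2.2.2.1, y.2.2.2.2.2.2.2.1, y.2.2.2.2.2.2.2.2) := rfl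
      _ = _ := h1.trans h2.symm
  · intro x10 x11 y1 z1 x20 x21 y2 z2 r hpe
    obtain ⟨hR, hk1, hk2D, _⟩ :=
      eq_char hβ1p hβ2p hA1e hA2e hτ11n hτ21n hτ21l hγ11.1 hγ21.1 hW10 hW20 hgap' hpe
    exact ⟨hk1, mul_right_cancel₀ hDpos.ne' (hk2D.trans hK1eq.symm), hR.trans (by ring)⟩
end

section
/- In the two-agent log-linear economy with policy (τ_{i,t}, γ_{i,t}, γ_{d,0}), set T_0 = τ_{1,0}w_{1,0} + τ_{2,0}w_{2,0}, γ_{c,1} = 1 − γ_{1,1} − γ_{2,1}, and suppose (1−τ_{2,1})(1 + a_2 γ_{d,0}T_0)A_2 > (1−τ_{1,1})(1 + a_1 γ_{d,0}T_0)A_1. Then in the unique political-economic equilibrium the date-1 GDP equals Y_1 = (1 − τ_{2,1}γ_{c,1})(1 + a_2 γ_{d,0}T_0) A_2 K_1, where K_1 = [β_2((1−τ_{2,0})w_{2,0} + γ_{2,0}T_0)/(1+β_2) + β_1((1−τ_{1,0})w_{1,0} + γ_{1,0}T_0)/(1+β_1)] / [1 + (γ_{2,1}/(1+β_2) + γ_{1,1}/(1+β_1))·τ_{2,1}/(1−τ_{2,1})].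 -/
open Set

lemma no_arb {β w τ0 τ1 γ0 γ1 Aeff R T0 T1 c0 c1 k b : ℝ}
    (hβ : 0 < β)
    (h : LogAgentOptimal β w τ0 τ1 γ0 γ1 Aeff R T0 T1 c0 c1 k b) :
    (1 - τ1) * Aeff ≤ R := by
  by_contra hlt
  push_neg at hlt
  obtain ⟨⟨hc0, hc1, hk, hb0, hb1⟩, hopt⟩ := h
  have hfeas2 : c1 + ((1 - τ1) * Aeff - R) ≤
      (1 - τ1) * Aeff * (k + 1) - R * (b + 1) + γ1 * T1 := by nlinarith
  have := hopt c0 (c1 + ((1 - τ1) * Aeff - R)) (k + 1) (b + 1) hc0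
    (by linarith) (by linarith) (by linarith) hfeas2
  nlinarith [Real.log_lt_log hc1 (show c1 < c1 + ((1-τ1)*Aeff - R) by linarith)]

lemma k_zero {β w τ0 τ1 γ0 γ1 Aeff R T0 T1 c0 c1 k b : ℝ}
    (hβ : 0 < β) (hstrict : (1 - τ1) * Aeff < R)
    (h : LogAgentOptimal β w τ0 τ1 γ0 γ1 Aeff R T0 T1 c0 c1 k b) :
    k = 0 := by
  obtain ⟨⟨hc0, hc1, hk, hb0, hb1⟩, hopt⟩ := h
  rcases hk.eq_or_lt with h0 | hkpos
  · exact h0.symm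
  exfalso
  have hfeas2 : c1 + (R - (1 - τ1) * Aeff) * k ≤
      (1 - τ1) * Aeff * 0 - R * (b - k) + γ1 * T1 := by nlinarith
  have := hopt c0 (c1 + (R - (1 - τ1) * Aeff) * k) 0 (b - k) hc0
    (by nlinarith) le_rfl (by linarith) hfeas2
  nlinarith [Real.log_lt_log hc1 (show c1 < c1 + (R - (1-τ1)*Aeff)*k by nlinarith)]

lemma log_agent_c0 {β w τ0 τ1 γ0 γ1 Aeff R T0 T1 c0 c1 k b : ℝ}
    (hβ : 0 < β) (hR : 0 < R) (hna : (1 - τ1) * Aeff ≤ R)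
    (hx : 0 < (1 - τ0) * w + γ0 * T0) (hM : 0 ≤ γ1 * T1)
    (h : LogAgentOptimal β w τ0 τ1 γ0 γ1 Aeff R T0 T1 c0 c1 k b) :
    c0 = ((1 - τ0) * w + γ0 * T0 + γ1 * T1 / R) / (1 + β) := by
  obtain ⟨⟨hc0, hc1, hk, hb0, hb1⟩, hopt⟩ := h
  set x0 : ℝ := (1 - τ0) * w + γ0 * T0 with hx0def
  set M : ℝ := γ1 * T1 with hMdef
  set W : ℝ := x0 + M / R with hWdef
  have h1β : (0:ℝ) < 1 + β := by linarith
  have hW : 0 < W := by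
    have : 0 ≤ M / R := div_nonneg hM hR.le
    have : 0 < x0 := hx
    simp only [hWdef]; linarith [div_nonneg hM hR.le]
  set t : ℝ := W / (1 + β) with htdef
  set c1s : ℝ := β * R * W / (1 + β) with hc1sdef
  have ht : 0 < t := div_pos hW h1β
  have hc1s : 0 < c1s := div_pos (by positivity) h1β
  have hRW : R * W = R * x0 + M := by
    rw [hWdef, mul_add, mul_div_assoc', mul_comm R M, mul_div_assoc, div_self hR.ne', mul_one]
  have hfeas2 : c1s ≤ (1 - τ1) * Aeff * 0 - R * (t - x0) + γ1 * T1 := by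
    have : c1s = R * W - R * t := by
      rw [hc1sdef, htdef]; field_simp; ring
    rw [this]
    rw [← hMdef]
    nlinarith [hRW]
  have hopt' := hopt t c1s 0 (t - x0) ht hc1s le_rfl (by linarith [hx0def.le, hx0def.ge]) hfeas2
  -- upper bound on c1
  have hub : c1 ≤ R * W - R * c0 := by
    have h1 : (1 - τ1) * Aeff * k ≤ R * k := mul_le_mul_of_nonneg_right hna hk
    have h2 : c0 + k - x0 ≤ b := by rw [hx0def]; linarith
    have h3 : -(R * b) ≤ -(R * (c0 + k - x0)) := by
      have := mul_le_mul_of_nonneg_left h2 hR.le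
      linarith
    nlinarith [hRW]
  have hc1ub : 0 < R * W - R * c0 := lt_of_lt_of_le hc1 hub
  suffices hct : c0 = t by
    rw [hct, htdef, hWdef, hx0def, hMdef]
  by_contra hne
  set u : ℝ := c0 / t with hudef
  set v : ℝ := (R * W - R * c0) / c1s with hvdef
  have hu1 : u ≠ 1 := by
    intro h1
    exact hne ((div_eq_one_iff_eq ht.ne').mp h1)
  have hlu : Real.log u < u - 1 := Real.log_lt_sub_one_of_pos (div_pos hc0 ht) hu1
  have hlv : Real.log v ≤ v - 1 := Real.log_le_sub_one_of_pos (div_pos hc1ub hc1s)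
  have hid : (u - 1) + β * (v - 1) = 0 := by
    rw [hudef, hvdef, htdef, hc1sdef]
    field_simp
    ring
  have hgesum : 0 ≤ Real.log u + β * Real.log v := by
    have e1 : Real.log u = Real.log c0 - Real.log t := Real.log_div hc0.ne' ht.ne'
    have e2 : Real.log v = Real.log (R * W - R * c0) - Real.log c1s :=
      Real.log_div hc1ub.ne' hc1s.ne'
    have e3 : Real.log c1 ≤ Real.log (R * W - R * c0) := Real.log_le_log hc1 hub
    have e4 : β * Real.log c1 ≤ β * Real.log (R * W - R * c0) :=
      mul_le_mul_of_nonneg_left e3 hβ.le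
    rw [e1, e2]
    linarith
  nlinarith [mul_le_mul_of_nonneg_left hlv hβ.le]

set_option maxHeartbeats 1000000 in
/-- Proposition 4.1, part 2: equilibrium GDP: in the two-agent
log-linear economy with policy `(τᵢₜ, γᵢₜ, γd)`, set `T0 = τ10 w1 + τ20 w2`,
`γc1 = 1 − γ11 − γ21`, and suppose
`(1−τ21)(1 + a2 γd T0)A2 > (1−τ11)(1 + a1 γd T0)A1`.  Then in the (unique)
political-economic equilibrium the date-1 GDP
`Y1 = Σᵢ 𝒜ᵢ(D0) kᵢ − γc1 T1` equals `(1 − τ21 γc1)(1 + a2 γd T0) A2 K1`,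
where `K1` is the closed-form aggregate capital. -/
theorem political_equilibrium_GDP
    (w1 w2 β1 β2 A1 A2 a1 a2 τ10 τ20 τ11 τ21 γ10 γ20 γ11 γ21 γd T0 K1 : ℝ)
    (hw1 : 0 < w1) (hw2 : 0 < w2)
    (hβ1 : β1 ∈ Set.Ioo (0 : ℝ) 1) (hβ2 : β2 ∈ Set.Ioo (0 : ℝ) 1)
    (hA1 : 0 < A1) (hA2 : 0 < A2) (ha1 : 0 ≤ a1) (ha2 : 0 ≤ a2)
    (hτ10 : τ10 ∈ Set.Ico (0 : ℝ) 1) (hτ20 : τ20 ∈ Set.Ico (0 : ℝ) 1)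
    (hτ11 : τ11 ∈ Set.Ico (0 : ℝ) 1) (hτ21 : τ21 ∈ Set.Ico (0 : ℝ) 1)
    (hγ10 : γ10 ∈ Set.Icc (0 : ℝ) 1) (hγ20 : γ20 ∈ Set.Icc (0 : ℝ) 1)
    (hγ11 : γ11 ∈ Set.Icc (0 : ℝ) 1) (hγ21 : γ21 ∈ Set.Icc (0 : ℝ) 1)
    (hγd : γd ∈ Set.Icc (0 : ℝ) 1)
    (hsum0 : γ10 + γ20 + γd ≤ 1) (hsum1 : γ11 + γ21 ≤ 1)
    (hT0 : T0 = τ10 * w1 + τ20 * w2)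
    (hgap : (1 - τ21) * (1 + a2 * (γd * T0)) * A2 >
            (1 - τ11) * (1 + a1 * (γd * T0)) * A1)
    (hK1 : K1 = (β2 * ((1 - τ20) * w2 + γ20 * T0) / (1 + β2) +
                 β1 * ((1 - τ10) * w1 + γ10 * T0) / (1 + β1)) /
                (1 + (γ21 / (1 + β2) + γ11 / (1 + β1)) * (τ21 / (1 - τ21)))) :
    ∀ c10 c11 k1 b1 c20 c21 k2 b2 R : ℝ,
      TwoAgentPolEq w1 w2 β1 β2 A1 A2 a1 a2 τ10 τ20 τ11 τ21 γ10 γ20 γ11 γ21 γd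
        c10 c11 k1 b1 c20 c21 k2 b2 R →
      (A1 * (1 + a1 * (γd * T0)) * k1 + A2 * (1 + a2 * (γd * T0)) * k2) -
        (1 - γ11 - γ21) *
          (τ11 * (A1 * (1 + a1 * (γd * T0))) * k1 +
           τ21 * (A2 * (1 + a2 * (γd * T0))) * k2) =
      (1 - τ21 * (1 - γ11 - γ21)) * (1 + a2 * (γd * T0)) * A2 * K1 := by
  intro c10 c11 k1 b1 c20 c21 k2 b2 R heq
  obtain ⟨hβ1p, hβ1lt⟩ := hβ1
  obtain ⟨hβ2p, hβ2lt⟩ := hβ2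
  obtain ⟨hτ10p, hτ10lt⟩ := hτ10
  obtain ⟨hτ20p, hτ20lt⟩ := hτ20
  obtain ⟨hτ11p, hτ11lt⟩ := hτ11
  obtain ⟨hτ21p, hτ21lt⟩ := hτ21
  have hT0nn : 0 ≤ T0 := by
    rw [hT0]; positivity
  unfold TwoAgentPolEq TwoAgentEq at heq
  rw [← hT0] at heq
  set A1e : ℝ := A1 * (1 + a1 * (γd * T0)) with hA1edef
  set A2e : ℝ := A2 * (1 + a2 * (γd * T0)) with hA2edef
  have hγT : (0:ℝ) ≤ γd * T0 := mul_nonneg hγd.1 hT0nn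
  have hfac1 : (0:ℝ) < 1 + a1 * (γd * T0) := by nlinarith [mul_nonneg ha1 hγT]
  have hfac2 : (0:ℝ) < 1 + a2 * (γd * T0) := by nlinarith [mul_nonneg ha2 hγT]
  have hA1e : 0 < A1e := by rw [hA1edef]; positivity
  have hA2e : 0 < A2e := by rw [hA2edef]; positivity
  obtain ⟨hR, h1, h2, hbsum, hmk0, hmk1⟩ := heq
  have hgap' : (1 - τ11) * A1e < (1 - τ21) * A2e := by
    have e1 : (1 - τ11) * A1e = (1 - τ11) * (1 + a1 * (γd * T0)) * A1 := by
      rw [hA1edef]; ring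
    have e2 : (1 - τ21) * A2e = (1 - τ21) * (1 + a2 * (γd * T0)) * A2 := by
      rw [hA2edef]; ring
    rw [e1, e2]; exact hgap
  have hna2 : (1 - τ21) * A2e ≤ R := no_arb hβ2p h2
  have hk1 : k1 = 0 := k_zero hβ1p (lt_of_lt_of_le hgap' hna2) h1
  -- interest rate pinned down
  have hRe : R = (1 - τ21) * A2e := by
    rcases hna2.eq_or_lt with h | h
    · exact h.symm
    · exfalso
      have hk2 : k2 = 0 := k_zero hβ2p h h2
      have hc11 : 0 < c11 := h1.1.2.1
      have hc21 : 0 < c21 := h2.1.2.1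
      rw [hk1, hk2] at hmk1
      simp only [mul_zero] at hmk1
      linarith
  set T1 : ℝ := τ11 * A1e * k1 + τ21 * A2e * k2 with hT1def
  have hk2nn : 0 ≤ k2 := h2.1.2.2.1
  have hT1nn : 0 ≤ T1 := by
    rw [hT1def, hk1]; positivity
  have hx1 : 0 < (1 - τ10) * w1 + γ10 * T0 := by nlinarith [hγ10.1]
  have hx2 : 0 < (1 - τ20) * w2 + γ20 * T0 := by nlinarith [hγ20.1]
  have hc10 : c10 = ((1 - τ10) * w1 + γ10 * T0 + γ11 * T1 / R) / (1 + β1) :=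
    log_agent_c0 hβ1p hR (le_of_lt (lt_of_lt_of_le hgap' hna2)) hx1
      (mul_nonneg hγ11.1 hT1nn) h1
  have hc20 : c20 = ((1 - τ20) * w2 + γ20 * T0 + γ21 * T1 / R) / (1 + β2) :=
    log_agent_c0 hβ2p hR hna2 hx2 (mul_nonneg hγ21.1 hT1nn) h2
  -- T1 / R in terms of k2
  have h1β1 : (0:ℝ) < 1 + β1 := by linarith
  have h1β2 : (0:ℝ) < 1 + β2 := by linarith
  have hτ21' : (0:ℝ) < 1 - τ21 := by linarith
  have hT1val : T1 = τ21 * A2e * k2 := by rw [hT1def, hk1]; ring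
  have hT1R : ∀ g : ℝ, g * T1 / R = g * (τ21 * k2) / (1 - τ21) := by
    intro g
    rw [hT1val, hRe]
    field_simp
  -- denominator positive
  have hden : (0:ℝ) < 1 + (γ21 / (1 + β2) + γ11 / (1 + β1)) * (τ21 / (1 - τ21)) := by
    have : 0 ≤ (γ21 / (1 + β2) + γ11 / (1 + β1)) * (τ21 / (1 - τ21)) := by
      apply mul_nonneg
      · have := div_nonneg hγ21.1 h1β2.le
        have := div_nonneg hγ11.1 h1β1.le
        linarith
      · exact div_nonneg hτ21p hτ21'.le
    linarith
  -- solve for k2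
  have hk2eq : k2 = K1 := by
    rw [hK1, eq_div_iff hden.ne']
    rw [hc10, hc20] at hmk0
    simp only [hT1R] at hmk0
    rw [hk1] at hmk0
    have e : k2 * (1 + (γ21 / (1 + β2) + γ11 / (1 + β1)) * (τ21 / (1 - τ21))) -
        (β2 * ((1 - τ20) * w2 + γ20 * T0) / (1 + β2) +
         β1 * ((1 - τ10) * w1 + γ10 * T0) / (1 + β1)) =
        ((1 - τ10) * w1 + γ10 * T0 + γ11 * (τ21 * k2) / (1 - τ21)) / (1 + β1) +
          ((1 - τ20) * w2 + γ20 * T0 + γ21 * (τ21 * k2) / (1 - τ21)) / (1 + β2) + 0 + k2 -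
          ((1 - τ10) * w1 + (1 - τ20) * w2 + (γ10 + γ20) * T0) := by
      field_simp
      ring
    linarith [e, hmk0]
  rw [hT1val, hk1, hk2eq]
  linear_combination (1 - τ21 * (1 - γ11 - γ21)) * K1 * hA2edef
end

section
/- Suppose τ_{2,1} > 0 and β_2((1−τ_{2,0})w_{2,0} + γ_{2,0}T_0)/(1+β_2) + β_1((1−τ_{1,0})w_{1,0} + γ_{1,0}T_0)/(1+β_1) > 0. Then the closed-form equilibrium aggregate capital K_1 = [β_2((1−τ_{2,0})w_{2,0} + γ_{2,0}T_0)/(1+β_2) + β_1((1−τ_{1,0})w_{1,0} + γ_{1,0}T_0)/(1+β_1)] / [1 + (γ_{2,1}/(1+β_2) + γ_{1,1}/(1+β_1))·τ_{2,1}/(1−τ_{2,1})] is strictly decreasing in γ_{1,1} and strictly decreasing in γ_{2,1} (all other parameters held fixed). -/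
open Set

/-- Date-0 government revenue `T0 = τ10·w1 + τ20·w2`. -/
noncomputable def T0 (w1 w2 τ10 τ20 : ℝ) : ℝ := τ10 * w1 + τ20 * w2

/-- Closed-form equilibrium aggregate capital of the two-agent log-linear
economy (Proposition 4.1):
`K1 = [β2((1−τ20)w2 + γ20 T0)/(1+β2) + β1((1−τ10)w1 + γ10 T0)/(1+β1)] /
[1 + (γ21/(1+β2) + γ11/(1+β1))·τ21/(1−τ21)]`. -/
noncomputable def K1 (w1 w2 β1 β2 τ10 τ20 τ21 γ10 γ20 γ11 γ21 : ℝ) : ℝ :=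
  (β2 * ((1 - τ20) * w2 + γ20 * T0 w1 w2 τ10 τ20) / (1 + β2) +
    β1 * ((1 - τ10) * w1 + γ10 * T0 w1 w2 τ10 τ20) / (1 + β1)) /
  (1 + (γ21 / (1 + β2) + γ11 / (1 + β1)) * (τ21 / (1 - τ21)))

/-- Closed-form equilibrium date-1 GDP of the two-agent log-linear economy
(Proposition 4.1): `Y1 = (1 − τ21 γc1)(1 + a2 γd T0) A2 K1` with
`γc1 = 1 − γ11 − γ21`. -/
noncomputable def Y1 (w1 w2 β1 β2 τ10 τ20 τ21 γ10 γ20 γ11 γ21 γd A2 a2 : ℝ) : ℝ :=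
  (1 - τ21 * (1 - γ11 - γ21)) * (1 + a2 * (γd * T0 w1 w2 τ10 τ20)) * A2 *
    K1 w1 w2 β1 β2 τ10 τ20 τ21 γ10 γ20 γ11 γ21

theorem div_one_add_mul_strictAntiOn {N c : ℝ} (hN : 0 < N) (hc : 0 < c) :
    StrictAntiOn (fun s => N / (1 + s * c)) (Ici 0) := fun s hs _ _ hlt =>
  div_lt_div_of_pos_left hN (add_pos_of_pos_of_nonneg one_pos (mul_nonneg hs hc.le)) (by gcongr)

theorem K1_lt_K1_of_transferShare_lt {w1 w2 β1 β2 τ10 τ20 τ21 γ10 γ20 γ11 γ21 γ11' γ21' : ℝ}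
    (hτ21pos : 0 < τ21) (hτ21lt : τ21 < 1)
    (hnum : 0 < β2 * ((1 - τ20) * w2 + γ20 * T0 w1 w2 τ10 τ20) / (1 + β2) +
             β1 * ((1 - τ10) * w1 + γ10 * T0 w1 w2 τ10 τ20) / (1 + β1))
    (hshare : 0 ≤ γ21 / (1 + β2) + γ11 / (1 + β1))
    (hlt : γ21 / (1 + β2) + γ11 / (1 + β1) < γ21' / (1 + β2) + γ11' / (1 + β1)) :
    K1 w1 w2 β1 β2 τ10 τ20 τ21 γ10 γ20 γ11' γ21' < K1 w1 w2 β1 β2 τ10 τ20 τ21 γ10 γ20 γ11 γ21 :=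
  div_one_add_mul_strictAntiOn hnum (div_pos hτ21pos (sub_pos.2 hτ21lt)) hshare
    (hshare.trans hlt.le) hlt

theorem K1_strictAnti_in_date1_transfers_general
    (w1 w2 β1 β2 τ10 τ20 τ21 γ10 γ20 : ℝ)
    (hβ1 : β1 ∈ Set.Ioo (0 : ℝ) 1) (hβ2 : β2 ∈ Set.Ioo (0 : ℝ) 1)
    (hτ21 : τ21 ∈ Set.Ico (0 : ℝ) 1)
    (hτ21pos : 0 < τ21)
    (hnum : 0 < β2 * ((1 - τ20) * w2 + γ20 * T0 w1 w2 τ10 τ20) / (1 + β2) +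
             β1 * ((1 - τ10) * w1 + γ10 * T0 w1 w2 τ10 τ20) / (1 + β1)) :
    (∀ γ11 γ11' γ21 : ℝ, γ11 ∈ Set.Icc (0 : ℝ) 1 → γ11' ∈ Set.Icc (0 : ℝ) 1 →
      γ21 ∈ Set.Icc (0 : ℝ) 1 → γ11 + γ21 ≤ 1 → γ11' + γ21 ≤ 1 →
      γ11 < γ11' →
      K1 w1 w2 β1 β2 τ10 τ20 τ21 γ10 γ20 γ11' γ21 <
        K1 w1 w2 β1 β2 τ10 τ20 τ21 γ10 γ20 γ11 γ21) ∧
    (∀ γ11 γ21 γ21' : ℝ, γ11 ∈ Set.Icc (0 : ℝ) 1 → γ21 ∈ Set.Icc (0 : ℝ) 1 →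
      γ21' ∈ Set.Icc (0 : ℝ) 1 → γ11 + γ21 ≤ 1 → γ11 + γ21' ≤ 1 →
      γ21 < γ21' →
      K1 w1 w2 β1 β2 τ10 τ20 τ21 γ10 γ20 γ11 γ21' <
        K1 w1 w2 β1 β2 τ10 τ20 τ21 γ10 γ20 γ11 γ21) := by
  have hb1 : 0 < 1 + β1 := by linarith [hβ1.1]
  have hb2 : 0 < 1 + β2 := by linarith [hβ2.1]
  refine ⟨fun γ11 γ11' γ21 h11 _ h21 _ _ hlt => ?_, fun γ11 γ21 γ21' h11 h21 _ _ _ hlt => ?_⟩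
  all_goals
    exact K1_lt_K1_of_transferShare_lt hτ21pos hτ21.2 hnum
      (add_nonneg (div_nonneg h21.1 hb2.le) (div_nonneg h11.1 hb1.le)) (by gcongr)

/-- if `τ21 > 0` and the numerator
`β2((1−τ20)w2 + γ20 T0)/(1+β2) + β1((1−τ10)w1 + γ10 T0)/(1+β1)` is positive,
then the closed-form equilibrium aggregate capital `K1` is strictly decreasing
in `γ11` and strictly decreasing in `γ21` (all other parameters held fixed). -/
theorem K1_strictAnti_in_date1_transfers
    (w1 w2 β1 β2 τ10 τ20 τ11 τ21 γ10 γ20 γd : ℝ)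
    (hw1 : 0 < w1) (hw2 : 0 < w2)
    (hβ1 : β1 ∈ Set.Ioo (0 : ℝ) 1) (hβ2 : β2 ∈ Set.Ioo (0 : ℝ) 1)
    (hτ10 : τ10 ∈ Set.Ico (0 : ℝ) 1) (hτ20 : τ20 ∈ Set.Ico (0 : ℝ) 1)
    (hτ11 : τ11 ∈ Set.Ico (0 : ℝ) 1) (hτ21 : τ21 ∈ Set.Ico (0 : ℝ) 1)
    (hγ10 : γ10 ∈ Set.Icc (0 : ℝ) 1) (hγ20 : γ20 ∈ Set.Icc (0 : ℝ) 1)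
    (hγd : γd ∈ Set.Icc (0 : ℝ) 1) (hsum0 : γ10 + γ20 + γd ≤ 1)
    (hτ21pos : 0 < τ21)
    (hnum : 0 < β2 * ((1 - τ20) * w2 + γ20 * T0 w1 w2 τ10 τ20) / (1 + β2) +
             β1 * ((1 - τ10) * w1 + γ10 * T0 w1 w2 τ10 τ20) / (1 + β1)) :
    (∀ γ11 γ11' γ21 : ℝ, γ11 ∈ Set.Icc (0 : ℝ) 1 → γ11' ∈ Set.Icc (0 : ℝ) 1 →
      γ21 ∈ Set.Icc (0 : ℝ) 1 → γ11 + γ21 ≤ 1 → γ11' + γ21 ≤ 1 →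
      γ11 < γ11' →
      K1 w1 w2 β1 β2 τ10 τ20 τ21 γ10 γ20 γ11' γ21 <
        K1 w1 w2 β1 β2 τ10 τ20 τ21 γ10 γ20 γ11 γ21) ∧
    (∀ γ11 γ21 γ21' : ℝ, γ11 ∈ Set.Icc (0 : ℝ) 1 → γ21 ∈ Set.Icc (0 : ℝ) 1 →
      γ21' ∈ Set.Icc (0 : ℝ) 1 → γ11 + γ21 ≤ 1 → γ11 + γ21' ≤ 1 →
      γ21 < γ21' →
      K1 w1 w2 β1 β2 τ10 τ20 τ21 γ10 γ20 γ11 γ21' <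
        K1 w1 w2 β1 β2 τ10 τ20 τ21 γ10 γ20 γ11 γ21) :=
  K1_strictAnti_in_date1_transfers_general w1 w2 β1 β2 τ10 τ20 τ21 γ10 γ20 hβ1 hβ2 hτ21 hτ21pos hnum
end

section
/- Date-0 corruption is harmful: the closed-form equilibrium GDP Y_1 = (1 − τ_{2,1}γ_{c,1})(1 + a_2 γ_{d,0}T_0) A_2 K_1 is strictly increasing in γ_{1,0} and in γ_{2,0} when T_0 > 0, and strictly increasing in γ_{d,0} when a_2 T_0 > 0 and K_1 > 0 and 1 − τ_{2,1}γ_{c,1} > 0 (all other parameters held fixed). Consequently, raising the diverted date-0 fraction γ_{c,0} = 1 − γ_{1,0} − γ_{2,0} − γ_{d,0} by lowering any of γ_{1,0}, γ_{2,0}, γ_{d,0} strictly lowers Y_1. -/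
open Set

/-!
`Y1 = (1 − τ21 γc1) (1 + a2 γd T0) A2 K1`, and the first three factors are positive. The shares
`γ10`, `γ20` enter only the numerator of `K1`, affinely with slopes `βi T0 / (1 + βi) > 0`, over a
positive denominator; `γd` enters only the second factor, affinely with slope `a2 T0`.
-/

theorem one_sub_mul_pos_of_lt_one {τ c : ℝ} (hτ0 : 0 ≤ τ) (hτ1 : τ < 1) (hc : c ≤ 1) :
    0 < 1 - τ * c := by
  nlinarith

section

variable {w1 w2 β1 β2 τ10 τ20 τ21 γ10 γ20 γ11 γ21 : ℝ}

theorem K1_denom_pos (hβ1 : 0 < β1) (hβ2 : 0 < β2) (hτ0 : 0 ≤ τ21) (hτ1 : τ21 < 1)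
    (hγ11 : 0 ≤ γ11) (hγ21 : 0 ≤ γ21) :
    0 < 1 + (γ21 / (1 + β2) + γ11 / (1 + β1)) * (τ21 / (1 - τ21)) := by
  have : 0 < 1 - τ21 := sub_pos.mpr hτ1
  positivity

theorem K1_strictMono_γ10 (hT : 0 < T0 w1 w2 τ10 τ20) (hβ1 : 0 < β1) (hβ2 : 0 < β2)
    (hτ0 : 0 ≤ τ21) (hτ1 : τ21 < 1) (hγ11 : 0 ≤ γ11) (hγ21 : 0 ≤ γ21) :
    StrictMono fun γ10 => K1 w1 w2 β1 β2 τ10 τ20 τ21 γ10 γ20 γ11 γ21 := by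
  have hD := K1_denom_pos hβ1 hβ2 hτ0 hτ1 hγ11 hγ21
  intro a b hab
  dsimp only [K1]
  gcongr

theorem K1_strictMono_γ20 (hT : 0 < T0 w1 w2 τ10 τ20) (hβ1 : 0 < β1) (hβ2 : 0 < β2)
    (hτ0 : 0 ≤ τ21) (hτ1 : τ21 < 1) (hγ11 : 0 ≤ γ11) (hγ21 : 0 ≤ γ21) :
    StrictMono fun γ20 => K1 w1 w2 β1 β2 τ10 τ20 τ21 γ10 γ20 γ11 γ21 := by
  have hD := K1_denom_pos hβ1 hβ2 hτ0 hτ1 hγ11 hγ21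
  intro a b hab
  dsimp only [K1]
  gcongr

theorem Y1_strictMono_γd {A2 a2 : ℝ} (hP : 0 < 1 - τ21 * (1 - γ11 - γ21)) (hA2 : 0 < A2)
    (hK : 0 < K1 w1 w2 β1 β2 τ10 τ20 τ21 γ10 γ20 γ11 γ21) (haT : 0 < a2 * T0 w1 w2 τ10 τ20) :
    StrictMono fun γd => Y1 w1 w2 β1 β2 τ10 τ20 τ21 γ10 γ20 γ11 γ21 γd A2 a2 := by
  intro x y hxy
  have : a2 * (x * T0 w1 w2 τ10 τ20) < a2 * (y * T0 w1 w2 τ10 τ20) := by nlinarith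
  dsimp only [Y1]
  gcongr _ * (1 + ?_) * _ * _

end

theorem Y1_strictMono_in_date0_shares_general
    (w1 w2 β1 β2 τ10 τ20 τ21 γ11 γ21 A2 a2 : ℝ)
    (hβ1 : β1 ∈ Set.Ioo (0 : ℝ) 1) (hβ2 : β2 ∈ Set.Ioo (0 : ℝ) 1)
    (hτ21 : τ21 ∈ Set.Ico (0 : ℝ) 1)
    (hγ11 : γ11 ∈ Set.Icc (0 : ℝ) 1) (hγ21 : γ21 ∈ Set.Icc (0 : ℝ) 1)
    (hA2 : 0 < A2) (ha2 : 0 ≤ a2) :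
    ((0 < T0 w1 w2 τ10 τ20) →
      ∀ γ10 γ10' γ20 γd : ℝ, γ10 ∈ Set.Icc (0 : ℝ) 1 → γ10' ∈ Set.Icc (0 : ℝ) 1 →
        γ20 ∈ Set.Icc (0 : ℝ) 1 → γd ∈ Set.Icc (0 : ℝ) 1 →
        γ10 + γ20 + γd ≤ 1 → γ10' + γ20 + γd ≤ 1 → γ10 < γ10' →
        Y1 w1 w2 β1 β2 τ10 τ20 τ21 γ10 γ20 γ11 γ21 γd A2 a2 <
          Y1 w1 w2 β1 β2 τ10 τ20 τ21 γ10' γ20 γ11 γ21 γd A2 a2) ∧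
    ((0 < T0 w1 w2 τ10 τ20) →
      ∀ γ10 γ20 γ20' γd : ℝ, γ10 ∈ Set.Icc (0 : ℝ) 1 → γ20 ∈ Set.Icc (0 : ℝ) 1 →
        γ20' ∈ Set.Icc (0 : ℝ) 1 → γd ∈ Set.Icc (0 : ℝ) 1 →
        γ10 + γ20 + γd ≤ 1 → γ10 + γ20' + γd ≤ 1 → γ20 < γ20' →
        Y1 w1 w2 β1 β2 τ10 τ20 τ21 γ10 γ20 γ11 γ21 γd A2 a2 <
          Y1 w1 w2 β1 β2 τ10 τ20 τ21 γ10 γ20' γ11 γ21 γd A2 a2) ∧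
    ((0 < a2 * T0 w1 w2 τ10 τ20) → (0 < 1 - τ21 * (1 - γ11 - γ21)) →
      ∀ γ10 γ20 γd γd' : ℝ, γ10 ∈ Set.Icc (0 : ℝ) 1 → γ20 ∈ Set.Icc (0 : ℝ) 1 →
        γd ∈ Set.Icc (0 : ℝ) 1 → γd' ∈ Set.Icc (0 : ℝ) 1 →
        γ10 + γ20 + γd ≤ 1 → γ10 + γ20 + γd' ≤ 1 →
        0 < K1 w1 w2 β1 β2 τ10 τ20 τ21 γ10 γ20 γ11 γ21 → γd < γd' →
        Y1 w1 w2 β1 β2 τ10 τ20 τ21 γ10 γ20 γ11 γ21 γd A2 a2 <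
          Y1 w1 w2 β1 β2 τ10 τ20 τ21 γ10 γ20 γ11 γ21 γd' A2 a2) := by
  obtain ⟨hβ1, -⟩ := hβ1
  obtain ⟨hβ2, -⟩ := hβ2
  obtain ⟨hτ0, hτ1⟩ := hτ21
  have hP : 0 < 1 - τ21 * (1 - γ11 - γ21) :=
    one_sub_mul_pos_of_lt_one hτ0 hτ1 (by linarith [hγ11.1, hγ21.1])
  have hQ (γd : ℝ) (hγd : γd ∈ Icc (0 : ℝ) 1) (hT : 0 < T0 w1 w2 τ10 τ20) :
      0 < 1 + a2 * (γd * T0 w1 w2 τ10 τ20) := by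
    have := mul_nonneg ha2 (mul_nonneg hγd.1 hT.le)
    linarith
  refine ⟨fun hT γ10 γ10' γ20 γd _ _ _ hγd _ _ hlt => ?_,
    fun hT γ10 γ20 γ20' γd _ _ _ hγd _ _ hlt => ?_,
    fun haT _ γ10 γ20 γd γd' _ _ _ _ _ _ hK hlt => ?_⟩
  · exact (K1_strictMono_γ10 hT hβ1 hβ2 hτ0 hτ1 hγ11.1 hγ21.1).const_mul
      (mul_pos (mul_pos hP (hQ γd hγd hT)) hA2) hlt
  · exact (K1_strictMono_γ20 hT hβ1 hβ2 hτ0 hτ1 hγ11.1 hγ21.1).const_mul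
      (mul_pos (mul_pos hP (hQ γd hγd hT)) hA2) hlt
  · exact Y1_strictMono_γd hP hA2 hK haT hlt

/-- date-0 corruption is harmful: the closed-form equilibrium
GDP `Y1 = (1 − τ21 γc1)(1 + a2 γd T0) A2 K1` is strictly increasing in `γ10` and
in `γ20` when `T0 > 0`, and strictly increasing in `γd` when `a2 T0 > 0`,
`K1 > 0` and `1 − τ21 γc1 > 0` (all other parameters held fixed).  Hence raising
the diverted date-0 fraction `γc0 = 1 − γ10 − γ20 − γd` by lowering any of
`γ10, γ20, γd` strictly lowers `Y1`. -/
theorem Y1_strictMono_in_date0_shares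
    (w1 w2 β1 β2 τ10 τ20 τ11 τ21 γ11 γ21 A2 a2 : ℝ)
    (hw1 : 0 < w1) (hw2 : 0 < w2)
    (hβ1 : β1 ∈ Set.Ioo (0 : ℝ) 1) (hβ2 : β2 ∈ Set.Ioo (0 : ℝ) 1)
    (hτ10 : τ10 ∈ Set.Ico (0 : ℝ) 1) (hτ20 : τ20 ∈ Set.Ico (0 : ℝ) 1)
    (hτ11 : τ11 ∈ Set.Ico (0 : ℝ) 1) (hτ21 : τ21 ∈ Set.Ico (0 : ℝ) 1)
    (hγ11 : γ11 ∈ Set.Icc (0 : ℝ) 1) (hγ21 : γ21 ∈ Set.Icc (0 : ℝ) 1)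
    (hsum1 : γ11 + γ21 ≤ 1) (hA2 : 0 < A2) (ha2 : 0 ≤ a2) :
    ((0 < T0 w1 w2 τ10 τ20) →
      ∀ γ10 γ10' γ20 γd : ℝ, γ10 ∈ Set.Icc (0 : ℝ) 1 → γ10' ∈ Set.Icc (0 : ℝ) 1 →
        γ20 ∈ Set.Icc (0 : ℝ) 1 → γd ∈ Set.Icc (0 : ℝ) 1 →
        γ10 + γ20 + γd ≤ 1 → γ10' + γ20 + γd ≤ 1 → γ10 < γ10' →
        Y1 w1 w2 β1 β2 τ10 τ20 τ21 γ10 γ20 γ11 γ21 γd A2 a2 <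
          Y1 w1 w2 β1 β2 τ10 τ20 τ21 γ10' γ20 γ11 γ21 γd A2 a2) ∧
    ((0 < T0 w1 w2 τ10 τ20) →
      ∀ γ10 γ20 γ20' γd : ℝ, γ10 ∈ Set.Icc (0 : ℝ) 1 → γ20 ∈ Set.Icc (0 : ℝ) 1 →
        γ20' ∈ Set.Icc (0 : ℝ) 1 → γd ∈ Set.Icc (0 : ℝ) 1 →
        γ10 + γ20 + γd ≤ 1 → γ10 + γ20' + γd ≤ 1 → γ20 < γ20' →
        Y1 w1 w2 β1 β2 τ10 τ20 τ21 γ10 γ20 γ11 γ21 γd A2 a2 <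
          Y1 w1 w2 β1 β2 τ10 τ20 τ21 γ10 γ20' γ11 γ21 γd A2 a2) ∧
    ((0 < a2 * T0 w1 w2 τ10 τ20) → (0 < 1 - τ21 * (1 - γ11 - γ21)) →
      ∀ γ10 γ20 γd γd' : ℝ, γ10 ∈ Set.Icc (0 : ℝ) 1 → γ20 ∈ Set.Icc (0 : ℝ) 1 →
        γd ∈ Set.Icc (0 : ℝ) 1 → γd' ∈ Set.Icc (0 : ℝ) 1 →
        γ10 + γ20 + γd ≤ 1 → γ10 + γ20 + γd' ≤ 1 →
        0 < K1 w1 w2 β1 β2 τ10 τ20 τ21 γ10 γ20 γ11 γ21 → γd < γd' →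
        Y1 w1 w2 β1 β2 τ10 τ20 τ21 γ10 γ20 γ11 γ21 γd A2 a2 <
          Y1 w1 w2 β1 β2 τ10 τ20 τ21 γ10 γ20 γ11 γ21 γd' A2 a2) :=
  Y1_strictMono_in_date0_shares_general w1 w2 β1 β2 τ10 τ20 τ21 γ11 γ21 A2 a2 hβ1 hβ2 hτ21 hγ11 hγ21
    hA2 ha2
end

section
/- Date-1 corruption is harmful when discount rates are equal: suppose β_1 = β_2 = β ∈ (0,1), τ_{2,1} ∈ (0,1), and the numerator β((1−τ_{2,0})w_{2,0} + γ_{2,0}T_0)/(1+β) + β((1−τ_{1,0})w_{1,0} + γ_{1,0}T_0)/(1+β) is positive. Then the closed-form equilibrium GDP Y_1, viewed as a function of s = γ_{1,1} + γ_{2,1} ∈ [0,1] (it depends on γ_{1,1}, γ_{2,1} only through s in this case), namely Y_1(s) = (1 − τ_{2,1}(1−s))(1 + a_2 γ_{d,0}T_0) A_2 · N / (1 + (s/(1+β))·τ_{2,1}/(1−τ_{2,1})) where N is the numerator above, is strictly increasing in s; equivalently Y_1 is strictly decreasing in the diverted date-1 fraction γ_{c,1} = 1 − s. -/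
open Set

/-- date-1 corruption is harmful with equal discount rates:
suppose `β1 = β2 = β ∈ (0,1)`, `τ21 ∈ (0,1)` and the numerator
`N = β((1−τ20)w2 + γ20 T0)/(1+β) + β((1−τ10)w1 + γ10 T0)/(1+β)` is positive.
Then the closed-form equilibrium GDP depends on `γ11, γ21` only through
`s = γ11 + γ21`, namely `Y1(s) = (1 − τ21(1−s))(1 + a2 γd T0) A2 · N /
(1 + (s/(1+β))·τ21/(1−τ21))`, and this function is strictly increasing on
`[0,1]`; equivalently `Y1` is strictly decreasing in the diverted date-1
fraction `γc1 = 1 − s`. -/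
theorem Y1_strictMono_in_date1_total_transfers
    (w1 w2 β τ10 τ20 τ11 τ21 γ10 γ20 γd A2 a2 N : ℝ)
    (hw1 : 0 < w1) (hw2 : 0 < w2) (hβ : β ∈ Set.Ioo (0 : ℝ) 1)
    (hτ10 : τ10 ∈ Set.Ico (0 : ℝ) 1) (hτ20 : τ20 ∈ Set.Ico (0 : ℝ) 1)
    (hτ11 : τ11 ∈ Set.Ico (0 : ℝ) 1) (hτ21 : τ21 ∈ Set.Ioo (0 : ℝ) 1)
    (hγ10 : γ10 ∈ Set.Icc (0 : ℝ) 1) (hγ20 : γ20 ∈ Set.Icc (0 : ℝ) 1)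
    (hγd : γd ∈ Set.Icc (0 : ℝ) 1) (hsum0 : γ10 + γ20 + γd ≤ 1)
    (hA2 : 0 < A2) (ha2 : 0 ≤ a2)
    (hN : N = β * ((1 - τ20) * w2 + γ20 * T0 w1 w2 τ10 τ20) / (1 + β) +
              β * ((1 - τ10) * w1 + γ10 * T0 w1 w2 τ10 τ20) / (1 + β))
    (hNpos : 0 < N) :
    (∀ γ11 γ21 : ℝ, 0 ≤ γ11 → 0 ≤ γ21 → γ11 + γ21 ≤ 1 →
      Y1 w1 w2 β β τ10 τ20 τ21 γ10 γ20 γ11 γ21 γd A2 a2 =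
        (1 - τ21 * (1 - (γ11 + γ21))) * (1 + a2 * (γd * T0 w1 w2 τ10 τ20)) * A2 *
          (N / (1 + ((γ11 + γ21) / (1 + β)) * (τ21 / (1 - τ21))))) ∧
    StrictMonoOn
      (fun s : ℝ =>
        (1 - τ21 * (1 - s)) * (1 + a2 * (γd * T0 w1 w2 τ10 τ20)) * A2 *
          (N / (1 + (s / (1 + β)) * (τ21 / (1 - τ21)))))
      (Set.Icc (0 : ℝ) 1) := by
  obtain ⟨hβ0, hβ1⟩ := hβ
  obtain ⟨hτ0, hτ1⟩ := hτ21
  have hβp : (0:ℝ) < 1 + β := by linarith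
  have h1τ : (0:ℝ) < 1 - τ21 := by linarith
  have hC : 0 < (1 + a2 * (γd * T0 w1 w2 τ10 τ20)) * A2 * N := by
    have hT0 : 0 ≤ T0 w1 w2 τ10 τ20 := by
      unfold T0
      have := hτ10.1; have := hτ20.1
      nlinarith [hw1.le, hw2.le]
    have h1 : 0 ≤ a2 * (γd * T0 w1 w2 τ10 τ20) :=
      mul_nonneg ha2 (mul_nonneg hγd.1 hT0)
    have h2 : (0:ℝ) < 1 + a2 * (γd * T0 w1 w2 τ10 τ20) := by linarith
    positivity
  constructor
  · intro γ11 γ21 h11 h21 hs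
    unfold Y1 K1
    rw [hN]
    have hden : (1 + (γ21 / (1 + β) + γ11 / (1 + β)) * (τ21 / (1 - τ21))) ≠ 0 := by
      have : 0 ≤ (γ21 / (1 + β) + γ11 / (1 + β)) * (τ21 / (1 - τ21)) := by positivity
      linarith
    have hden2 : (1 + ((γ11 + γ21) / (1 + β)) * (τ21 / (1 - τ21))) ≠ 0 := by
      have : 0 ≤ ((γ11 + γ21) / (1 + β)) * (τ21 / (1 - τ21)) := by positivity
      linarith
    field_simp
    ring
  · intro x hx y hy hxy
    have hDx : (0:ℝ) < 1 + (x / (1 + β)) * (τ21 / (1 - τ21)) := by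
      have : 0 ≤ (x / (1 + β)) * (τ21 / (1 - τ21)) := by
        have := hx.1; positivity
      linarith
    have hDy : (0:ℝ) < 1 + (y / (1 + β)) * (τ21 / (1 - τ21)) := by
      have : 0 ≤ (y / (1 + β)) * (τ21 / (1 - τ21)) := by
        have := hy.1; positivity
      linarith
    simp only
    have key : (1 - τ21 * (1 - x)) / (1 + (x / (1 + β)) * (τ21 / (1 - τ21))) <
        (1 - τ21 * (1 - y)) / (1 + (y / (1 + β)) * (τ21 / (1 - τ21))) := by
      rw [div_lt_div_iff₀ hDx hDy]
      have hne1 : (1 + β) ≠ 0 := ne_of_gt hβp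
      have hne2 : (1 - τ21) ≠ 0 := ne_of_gt h1τ
      have hd : 0 < y - x := sub_pos.2 hxy
      field_simp
      nlinarith [mul_pos (mul_pos (mul_pos hτ0 hd) h1τ) hβ0, mul_pos (mul_pos hβp h1τ) (mul_pos (mul_pos (mul_pos hτ0 hd) h1τ) hβ0)]
    calc (1 - τ21 * (1 - x)) * (1 + a2 * (γd * T0 w1 w2 τ10 τ20)) * A2 *
          (N / (1 + (x / (1 + β)) * (τ21 / (1 - τ21))))
        = ((1 + a2 * (γd * T0 w1 w2 τ10 τ20)) * A2 * N) *
          ((1 - τ21 * (1 - x)) / (1 + (x / (1 + β)) * (τ21 / (1 - τ21)))) := by ring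
      _ < ((1 + a2 * (γd * T0 w1 w2 τ10 τ20)) * A2 * N) *
          ((1 - τ21 * (1 - y)) / (1 + (y / (1 + β)) * (τ21 / (1 - τ21)))) := by
          exact mul_lt_mul_of_pos_left key hC
      _ = (1 - τ21 * (1 - y)) * (1 + a2 * (γd * T0 w1 w2 τ10 τ20)) * A2 *
          (N / (1 + (y / (1 + β)) * (τ21 / (1 - τ21)))) := by ring
end

section
/- In the two-agent log-linear economy, suppose (1−τ_{2,1})(1 + a_2 γ_{d,0}T_0)A_2 > (1−τ_{1,1})(1 + a_1 γ_{d,0}T_0)A_1 where T_0 = τ_{1,0}w_{1,0} + τ_{2,0}w_{2,0}, and A_1 ≠ A_2. Then the gap between equilibrium GDP with intervention and equilibrium GDP without intervention equals Y_1 − Y_1* = (1 − τ_{2,1}γ_{c,1})(1 + a_2 γ_{d,0}T_0) A_2 · [β_2((1−τ_{2,0})w_{2,0} + γ_{2,0}T_0)/(1+β_2) + β_1((1−τ_{1,0})w_{1,0} + γ_{1,0}T_0)/(1+β_1)] / [1 + (γ_{2,1}/(1+β_2) + γ_{1,1}/(1+β_1))·τ_{2,1}/(1−τ_{2,1})] −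 (β_2 w_{2,0}/(1+β_2) + β_1 w_{1,0}/(1+β_1))·max(A_1, A_2), where γ_{c,1} = 1 − γ_{1,1} − γ_{2,1}; and the aggregate capital gap K_1 − K_1* equals the corresponding difference of the bracketed ratio and β_2 w_{2,0}/(1+β_2) + β_1 w_{1,0}/(1+β_1). -/
open Set

lemma aux_no_arbitrage {β w τ0 τ1 γ0 γ1 Aeff R T0 T1 c0 c1 k b : ℝ}
    (h : LogAgentOptimal β w τ0 τ1 γ0 γ1 Aeff R T0 T1 c0 c1 k b)
    (hβ : 0 < β) (he : 0 < (1 - τ0) * w + γ0 * T0) (hT1 : 0 ≤ γ1 * T1) :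
    (1 - τ1) * Aeff ≤ R := by
  by_contra hlt
  push_neg at hlt
  obtain ⟨_, hopt⟩ := h
  set e : ℝ := (1 - τ0) * w + γ0 * T0 with hedef
  set U : ℝ := Real.log c0 + β * Real.log c1 with hU
  have hρR : 0 < (1 - τ1) * Aeff - R := by linarith
  set k' : ℝ := Real.exp ((U - Real.log e + 1) / β) / ((1 - τ1) * Aeff - R) with hk'
  have hk'pos : 0 < k' := div_pos (Real.exp_pos _) hρR
  have hc1' : (0:ℝ) < ((1 - τ1) * Aeff - R) * k' := mul_pos hρR hk'pos
  have happ := hopt e (((1 - τ1) * Aeff - R) * k') k' k' he hc1' hk'pos.le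
    (by rw [hedef]; ring_nf; linarith)
    (by nlinarith)
  have hval : ((1 - τ1) * Aeff - R) * k' = Real.exp ((U - Real.log e + 1) / β) := by
    rw [hk', mul_comm, div_mul_cancel₀ _ hρR.ne']
  rw [hval, Real.log_exp, mul_div_cancel₀ _ hβ.ne'] at happ
  linarith

lemma aux_no_capital {β w τ0 τ1 γ0 γ1 Aeff R T0 T1 c0 c1 k b : ℝ}
    (h : LogAgentOptimal β w τ0 τ1 γ0 γ1 Aeff R T0 T1 c0 c1 k b)
    (hβ : 0 < β) (hlt : (1 - τ1) * Aeff < R) : k = 0 := by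
  obtain ⟨⟨hc0, hc1, hk, hb0, hb1⟩, hopt⟩ := h
  by_contra hne
  have hkpos : 0 < k := lt_of_le_of_ne hk (Ne.symm hne)
  have hc1' : c1 < c1 + (R - (1 - τ1) * Aeff) * k := by nlinarith
  have happ := hopt c0 (c1 + (R - (1 - τ1) * Aeff) * k) 0 (b - k) hc0 (hc1.trans hc1')
    le_rfl (by linarith) (by nlinarith)
  nlinarith [mul_lt_mul_of_pos_left (Real.log_lt_log hc1 hc1') hβ]

lemma aux_consumption {β w τ0 τ1 γ0 γ1 Aeff R T0 T1 c0 c1 k b : ℝ}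
    (h : LogAgentOptimal β w τ0 τ1 γ0 γ1 Aeff R T0 T1 c0 c1 k b)
    (hβ : 0 < β) (hR : 0 < R)
    (he : 0 < (1 - τ0) * w + γ0 * T0) (hT1 : 0 ≤ γ1 * T1)
    (hρ : (1 - τ1) * Aeff ≤ R) :
    c0 = ((1 - τ0) * w + γ0 * T0 + γ1 * T1 / R) / (1 + β) := by
  obtain ⟨⟨hc0, hc1, hk, hb0, hb1⟩, hopt⟩ := h
  set e : ℝ := (1 - τ0) * w + γ0 * T0 with hedef
  set W : ℝ := e + γ1 * T1 / R with hW
  have hWpos : 0 < W := by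
    have : 0 ≤ γ1 * T1 / R := div_nonneg hT1 hR.le
    rw [hW]; linarith
  have hβ1 : (0:ℝ) < 1 + β := by linarith
  set c0s : ℝ := W / (1 + β) with hc0s
  set c1s : ℝ := β * R * W / (1 + β) with hc1s
  have hc0spos : 0 < c0s := div_pos hWpos hβ1
  have hc1spos : 0 < c1s := div_pos (by positivity) hβ1
  -- budget of equilibrium plan in combined form
  have hbud : c0 + c1 / R ≤ W := by
    have h1 : c1 ≤ R * k - R * b + γ1 * T1 := by nlinarith
    have h2 : c1 / R ≤ k - b + γ1 * T1 / R := by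
      rw [div_le_iff₀ hR]
      have hcanc : γ1 * T1 / R * R = γ1 * T1 := div_mul_cancel₀ _ hR.ne'
      nlinarith
    rw [hW, hedef]; linarith
  -- candidate plan is feasible
  have hfeas2 : c1s ≤ (1 - τ1) * Aeff * 0 - R * (c0s - e) + γ1 * T1 := by
    have : c1s = R * (W - c0s) := by
      rw [hc1s, hc0s]; field_simp; ring
    rw [this, hW]
    have : R * (γ1 * T1 / R) = γ1 * T1 := by
      rw [mul_comm]; exact div_mul_cancel₀ _ hR.ne'
    nlinarith [this]
  have happ := hopt c0s c1s 0 (c0s - e) hc0spos hc1spos le_rfl (by rw [hedef]; ring_nf; linarith)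
    hfeas2
  -- equality case of concavity
  by_contra hne
  have key1 : Real.log (c0 / c0s) < c0 / c0s - 1 :=
    Real.log_lt_sub_one_of_pos (div_pos hc0 hc0spos)
      (by
        intro hx
        exact hne (by field_simp at hx; linarith))
  have key2 : Real.log (c1 / c1s) ≤ c1 / c1s - 1 :=
    Real.log_le_sub_one_of_pos (div_pos hc1 hc1spos)
  rw [Real.log_div hc0.ne' hc0spos.ne'] at key1
  rw [Real.log_div hc1.ne' hc1spos.ne'] at key2
  have key2' : β * (Real.log c1 - Real.log c1s) ≤ β * (c1 / c1s - 1) :=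
    mul_le_mul_of_nonneg_left key2 hβ.le
  have hcomb : c0 / c0s + β * (c1 / c1s) = (1 + β) / W * (c0 + c1 / R) := by
    rw [hc0s, hc1s]; field_simp
  have hle : (1 + β) / W * (c0 + c1 / R) ≤ (1 + β) / W * W :=
    mul_le_mul_of_nonneg_left hbud (by positivity)
  rw [div_mul_cancel₀ _ hWpos.ne'] at hle
  nlinarith [key1, key2', happ, hcomb, hle]

set_option maxHeartbeats 1000000 in
/-- Proposition 4.2: output and capital gaps between intervention
and inaction: in the two-agent log-linear economy, under the productivity-ranking
condition `(1−τ21)(1 + a2 γd T0)A2 > (1−τ11)(1 + a1 γd T0)A1` (with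
`T0 = τ10 w1 + τ20 w2`) and `A1 ≠ A2`, in any political-economic equilibrium the
gap between the GDP with intervention, `Y1 = Σᵢ 𝒜ᵢ(D0)kᵢ − γc1 T1`, and the GDP
without intervention, `Y1* = (β2 w2/(1+β2) + β1 w1/(1+β1))·max(A1,A2)`, equals
`(1 − τ21 γc1)(1 + a2 γd T0)A2·K1 − Y1*`, and the capital gap
`(k1 + k2) − K1*` equals `K1 − K1*`, where `K1` is the closed-form aggregate
capital and `K1* = β2 w2/(1+β2) + β1 w1/(1+β1)`. -/
theorem intervention_vs_inaction_gaps
    (w1 w2 β1 β2 A1 A2 a1 a2 τ10 τ20 τ11 τ21 γ10 γ20 γ11 γ21 γd T0 K1 : ℝ)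
    (hw1 : 0 < w1) (hw2 : 0 < w2)
    (hβ1 : β1 ∈ Set.Ioo (0 : ℝ) 1) (hβ2 : β2 ∈ Set.Ioo (0 : ℝ) 1)
    (hA1 : 0 < A1) (hA2 : 0 < A2) (hA : A1 ≠ A2) (ha1 : 0 ≤ a1) (ha2 : 0 ≤ a2)
    (hτ10 : τ10 ∈ Set.Ico (0 : ℝ) 1) (hτ20 : τ20 ∈ Set.Ico (0 : ℝ) 1)
    (hτ11 : τ11 ∈ Set.Ico (0 : ℝ) 1) (hτ21 : τ21 ∈ Set.Ico (0 : ℝ) 1)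
    (hγ10 : γ10 ∈ Set.Icc (0 : ℝ) 1) (hγ20 : γ20 ∈ Set.Icc (0 : ℝ) 1)
    (hγ11 : γ11 ∈ Set.Icc (0 : ℝ) 1) (hγ21 : γ21 ∈ Set.Icc (0 : ℝ) 1)
    (hγd : γd ∈ Set.Icc (0 : ℝ) 1)
    (hsum0 : γ10 + γ20 + γd ≤ 1) (hsum1 : γ11 + γ21 ≤ 1)
    (hT0 : T0 = τ10 * w1 + τ20 * w2)
    (hgap : (1 - τ21) * (1 + a2 * (γd * T0)) * A2 >
            (1 - τ11) * (1 + a1 * (γd * T0)) * A1)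
    (hK1 : K1 = (β2 * ((1 - τ20) * w2 + γ20 * T0) / (1 + β2) +
                 β1 * ((1 - τ10) * w1 + γ10 * T0) / (1 + β1)) /
                (1 + (γ21 / (1 + β2) + γ11 / (1 + β1)) * (τ21 / (1 - τ21)))) :
    ∀ c10 c11 k1 b1 c20 c21 k2 b2 R : ℝ,
      TwoAgentPolEq w1 w2 β1 β2 A1 A2 a1 a2 τ10 τ20 τ11 τ21 γ10 γ20 γ11 γ21 γd
        c10 c11 k1 b1 c20 c21 k2 b2 R →
      ((A1 * (1 + a1 * (γd * T0)) * k1 + A2 * (1 + a2 * (γd * T0)) * k2) -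
          (1 - γ11 - γ21) *
            (τ11 * (A1 * (1 + a1 * (γd * T0))) * k1 +
             τ21 * (A2 * (1 + a2 * (γd * T0))) * k2)) -
        (β2 / (1 + β2) * w2 + β1 / (1 + β1) * w1) * max A1 A2 =
      (1 - τ21 * (1 - γ11 - γ21)) * (1 + a2 * (γd * T0)) * A2 * K1 -
        (β2 / (1 + β2) * w2 + β1 / (1 + β1) * w1) * max A1 A2 ∧
      (k1 + k2) - (β2 / (1 + β2) * w2 + β1 / (1 + β1) * w1) =
      K1 - (β2 / (1 + β2) * w2 + β1 / (1 + β1) * w1) := by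
  intro c10 c11 k1 b1 c20 c21 k2 b2 R heq
  obtain ⟨hβ1p, hβ1l⟩ := hβ1
  obtain ⟨hβ2p, hβ2l⟩ := hβ2
  obtain ⟨hτ10p, hτ10l⟩ := hτ10
  obtain ⟨hτ20p, hτ20l⟩ := hτ20
  obtain ⟨hτ11p, hτ11l⟩ := hτ11
  obtain ⟨hτ21p, hτ21l⟩ := hτ21
  simp only [TwoAgentPolEq, TwoAgentEq] at heq
  rw [← hT0] at heq
  obtain ⟨hR, hopt1, hopt2, hbm, hg0, hg1⟩ := heq
  set A1e : ℝ := A1 * (1 + a1 * (γd * T0)) with hA1e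
  set A2e : ℝ := A2 * (1 + a2 * (γd * T0)) with hA2e
  set T1 : ℝ := τ11 * A1e * k1 + τ21 * A2e * k2 with hT1def
  have hT0nn : 0 ≤ T0 := by rw [hT0]; nlinarith
  have hD0nn : 0 ≤ γd * T0 := mul_nonneg hγd.1 hT0nn
  have hA1ep : 0 < A1e := by rw [hA1e]; nlinarith [mul_nonneg ha1 hD0nn]
  have hA2ep : 0 < A2e := by rw [hA2e]; nlinarith [mul_nonneg ha2 hD0nn]
  have hk1nn : 0 ≤ k1 := hopt1.1.2.2.1
  have hk2nn : 0 ≤ k2 := hopt2.1.2.2.1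
  have hT1nn : 0 ≤ T1 := by
    rw [hT1def]
    have := mul_nonneg (mul_nonneg hτ11p hA1ep.le) hk1nn
    have := mul_nonneg (mul_nonneg hτ21p hA2ep.le) hk2nn
    linarith
  have he1 : 0 < (1 - τ10) * w1 + γ10 * T0 := by nlinarith [mul_nonneg hγ10.1 hT0nn]
  have he2 : 0 < (1 - τ20) * w2 + γ20 * T0 := by nlinarith [mul_nonneg hγ20.1 hT0nn]
  have hγ11T1 : 0 ≤ γ11 * T1 := mul_nonneg hγ11.1 hT1nn
  have hγ21T1 : 0 ≤ γ21 * T1 := mul_nonneg hγ21.1 hT1nn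
  have hgap' : (1 - τ11) * A1e < (1 - τ21) * A2e := by rw [hA1e, hA2e]; nlinarith
  have hρ1 : (1 - τ11) * A1e ≤ R := aux_no_arbitrage hopt1 hβ1p he1 hγ11T1
  have hρ2 : (1 - τ21) * A2e ≤ R := aux_no_arbitrage hopt2 hβ2p he2 hγ21T1
  -- R = (1-τ21) * A2e
  have hReq : R = (1 - τ21) * A2e := by
    by_contra hne
    have hlt2 : (1 - τ21) * A2e < R := lt_of_le_of_ne hρ2 (fun h => hne h.symm)
    have hk2z : k2 = 0 := aux_no_capital hopt2 hβ2p hlt2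
    have hk1z : k1 = 0 := aux_no_capital hopt1 hβ1p (lt_trans hgap' hlt2)
    have hT1z : T1 = 0 := by rw [hT1def, hk1z, hk2z]; ring
    have hc11 : 0 < c11 := hopt1.1.2.1
    have hc21 : 0 < c21 := hopt2.1.2.1
    rw [hk1z, hk2z, hT1z] at hg1
    nlinarith
  have hk1z : k1 = 0 := aux_no_capital hopt1 hβ1p (by rw [hReq]; exact hgap')
  have hc10 : c10 = ((1 - τ10) * w1 + γ10 * T0 + γ11 * T1 / R) / (1 + β1) :=
    aux_consumption hopt1 hβ1p hR he1 hγ11T1 hρ1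
  have hc20 : c20 = ((1 - τ20) * w2 + γ20 * T0 + γ21 * T1 / R) / (1 + β2) :=
    aux_consumption hopt2 hβ2p hR he2 hγ21T1 hρ2
  -- T1 / R
  have hβ1p' : (0:ℝ) < 1 + β1 := by linarith
  have hβ2p' : (0:ℝ) < 1 + β2 := by linarith
  have hτ21' : (0:ℝ) < 1 - τ21 := by linarith
  have hTR : T1 / R = τ21 * k2 / (1 - τ21) := by
    rw [hT1def, hk1z, hReq]
    field_simp
    ring
  have hDden : 0 < 1 + (γ21 / (1 + β2) + γ11 / (1 + β1)) * (τ21 / (1 - τ21)) := by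
    have : 0 ≤ (γ21 / (1 + β2) + γ11 / (1 + β1)) * (τ21 / (1 - τ21)) :=
      mul_nonneg (add_nonneg (div_nonneg hγ21.1 hβ2p'.le) (div_nonneg hγ11.1 hβ1p'.le))
        (div_nonneg hτ21p hτ21'.le)
    linarith
  have h1 : c10 * ((1 + β1) * (1 - τ21)) =
      ((1 - τ10) * w1 + γ10 * T0) * (1 - τ21) + γ11 * (τ21 * k2) := by
    rw [hc10, mul_div_assoc, hTR]
    field_simp
  have h2 : c20 * ((1 + β2) * (1 - τ21)) =
      ((1 - τ20) * w2 + γ20 * T0) * (1 - τ21) + γ21 * (τ21 * k2) := by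
    rw [hc20, mul_div_assoc, hTR]
    field_simp
  have hP : 0 < (1 + β1) * (1 + β2) * (1 - τ21) + γ21 * τ21 * (1 + β1) + γ11 * τ21 * (1 + β2) := by
    linarith [mul_pos (mul_pos hβ1p' hβ2p') hτ21',
      mul_nonneg (mul_nonneg hγ21.1 hτ21p) hβ1p'.le,
      mul_nonneg (mul_nonneg hγ11.1 hτ21p) hβ2p'.le]
  have hK1' : K1 = (β2 * ((1 - τ20) * w2 + γ20 * T0) * (1 + β1) * (1 - τ21) +
      β1 * ((1 - τ10) * w1 + γ10 * T0) * (1 + β2) * (1 - τ21)) /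
      ((1 + β1) * (1 + β2) * (1 - τ21) + γ21 * τ21 * (1 + β1) + γ11 * τ21 * (1 + β2)) := by
    rw [hK1, div_eq_div_iff hDden.ne' hP.ne']
    field_simp
    ring
  have hk2 : k2 = K1 := by
    rw [hk1z] at hg0
    rw [hK1', eq_div_iff hP.ne']
    linear_combination ((1 + β1) * (1 + β2) * (1 - τ21)) * hg0 - (1 + β2) * h1 - (1 + β1) * h2
  rw [hT1def, hk1z, hk2, hA1e, hA2e]
  constructor
  · ring
  · ring
end

section
/- Suppose γ_{d,0} = 0, τ_{1,1} = τ_{2,1} = 0, A_2 > A_1, and β_1 = β_2 = β ∈ (0,1). Then Y_1 − Y_1* = −(β/(1+β))·A_2·γ_{c,0}·T_0 ≤ 0, where γ_{c,0} = 1 − γ_{1,0} − γ_{2,0}; and if T_0 > 0, then Y_1 − Y_1* < 0 if and only if the diverted fraction γ_{c,0} > 0. -/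
open Set

/-- Closed-form equilibrium date-1 GDP with intervention in the two-agent
log-linear economy when `γd = 0` and there are no date-1 taxes
(`τ11 = τ21 = 0`); the formula is valid when `A2 > A1`. -/
noncomputable def Y1NoTax (w1 w2 β1 β2 τ10 τ20 γ10 γ20 A2 : ℝ) : ℝ :=
  A2 * (β2 * ((1 - τ20) * w2 + γ20 * T0 w1 w2 τ10 τ20) / (1 + β2) +
        β1 * ((1 - τ10) * w1 + γ10 * T0 w1 w2 τ10 τ20) / (1 + β1))

/-- Equilibrium date-1 GDP without any intervention:
`Y1* = (β2 w2/(1+β2) + β1 w1/(1+β1))·max(A1, A2)`. -/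
noncomputable def Y1star (w1 w2 β1 β2 A1 A2 : ℝ) : ℝ :=
  (β2 * w2 / (1 + β2) + β1 * w1 / (1 + β1)) * max A1 A2

lemma T0_nonneg {w1 w2 τ10 τ20 : ℝ} (hw1 : 0 ≤ w1) (hw2 : 0 ≤ w2) (hτ10 : 0 ≤ τ10)
    (hτ20 : 0 ≤ τ20) : 0 ≤ T0 w1 w2 τ10 τ20 := by
  unfold T0
  positivity

/-- With equal discount factors both agents save the same share `β/(1+β)` of their income, so
the policy only reshuffles wealth, except for the diverted revenue `(1 - γ10 - γ20)·T0`. -/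
lemma Y1NoTax_sub_Y1star (w1 w2 β τ10 τ20 γ10 γ20 : ℝ) {A1 A2 : ℝ} (hβ : 1 + β ≠ 0)
    (hA : A1 ≤ A2) :
    Y1NoTax w1 w2 β β τ10 τ20 γ10 γ20 A2 - Y1star w1 w2 β β A1 A2 =
      -(β / (1 + β)) * A2 * ((1 - γ10 - γ20) * T0 w1 w2 τ10 τ20) := by
  rw [Y1NoTax, Y1star, T0, max_eq_right hA]
  field_simp
  ring

lemma neg_mul_mul_nonpos {k g T : ℝ} (hk : 0 ≤ k) (hg : 0 ≤ g) (hT : 0 ≤ T) :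
    -k * (g * T) ≤ 0 := by
  rw [neg_mul, neg_nonpos]
  positivity

lemma neg_mul_mul_neg_iff {k g T : ℝ} (hk : 0 < k) (hT : 0 < T) :
    -k * (g * T) < 0 ↔ 0 < g := by
  rw [neg_mul, neg_lt_zero, mul_pos_iff_of_pos_left hk, mul_pos_iff_of_pos_right hT]

theorem output_gap_equal_discount_factors_general
    (w1 w2 β τ10 τ20 γ10 γ20 A1 A2 : ℝ)
    (hw1 : 0 < w1) (hw2 : 0 < w2) (hβ : β ∈ Set.Ioo (0 : ℝ) 1)
    (hτ10 : τ10 ∈ Set.Ico (0 : ℝ) 1) (hτ20 : τ20 ∈ Set.Ico (0 : ℝ) 1)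
    (hsum0 : γ10 + γ20 ≤ 1)
    (hA2 : 0 < A2) (hA : A1 < A2) :
    Y1NoTax w1 w2 β β τ10 τ20 γ10 γ20 A2 - Y1star w1 w2 β β A1 A2 =
      -(β / (1 + β)) * A2 * ((1 - γ10 - γ20) * T0 w1 w2 τ10 τ20) ∧
    Y1NoTax w1 w2 β β τ10 τ20 γ10 γ20 A2 - Y1star w1 w2 β β A1 A2 ≤ 0 ∧
    (0 < T0 w1 w2 τ10 τ20 →
      (Y1NoTax w1 w2 β β τ10 τ20 γ10 γ20 A2 - Y1star w1 w2 β β A1 A2 < 0 ↔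
        0 < 1 - γ10 - γ20)) := by
  have hβ0 : 0 < β := hβ.1
  have hgap := Y1NoTax_sub_Y1star w1 w2 β τ10 τ20 γ10 γ20 (by positivity : 1 + β ≠ 0) hA.le
  have hk : 0 < β / (1 + β) * A2 := by positivity
  rw [hgap, neg_mul]
  refine ⟨rfl, neg_mul_mul_nonpos hk.le (by linarith) ?_, neg_mul_mul_neg_iff hk⟩
  exact T0_nonneg hw1.le hw2.le hτ10.1 hτ20.1

/-- Proposition 4.4, point 1: with equal discount factors,
date-0 corruption alone determines the sign of the gap: if `γd = 0`,
`τ11 = τ21 = 0`, `A2 > A1` and `β1 = β2 = β`, then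
`Y1 − Y1* = −(β/(1+β))·A2·γc0·T0 ≤ 0` with `γc0 = 1 − γ10 − γ20`; and if
`T0 > 0`, then `Y1 − Y1* < 0` if and only if the diverted fraction `γc0 > 0`. -/
theorem output_gap_equal_discount_factors
    (w1 w2 β τ10 τ20 γ10 γ20 A1 A2 : ℝ)
    (hw1 : 0 < w1) (hw2 : 0 < w2) (hβ : β ∈ Set.Ioo (0 : ℝ) 1)
    (hτ10 : τ10 ∈ Set.Ico (0 : ℝ) 1) (hτ20 : τ20 ∈ Set.Ico (0 : ℝ) 1)
    (hγ10 : γ10 ∈ Set.Icc (0 : ℝ) 1) (hγ20 : γ20 ∈ Set.Icc (0 : ℝ) 1)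
    (hsum0 : γ10 + γ20 ≤ 1)
    (hA1 : 0 < A1) (hA2 : 0 < A2) (hA : A1 < A2) :
    Y1NoTax w1 w2 β β τ10 τ20 γ10 γ20 A2 - Y1star w1 w2 β β A1 A2 =
      -(β / (1 + β)) * A2 * ((1 - γ10 - γ20) * T0 w1 w2 τ10 τ20) ∧
    Y1NoTax w1 w2 β β τ10 τ20 γ10 γ20 A2 - Y1star w1 w2 β β A1 A2 ≤ 0 ∧
    (0 < T0 w1 w2 τ10 τ20 →
      (Y1NoTax w1 w2 β β τ10 τ20 γ10 γ20 A2 - Y1star w1 w2 β β A1 A2 < 0 ↔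
        0 < 1 - γ10 - γ20)) :=
  output_gap_equal_discount_factors_general w1 w2 β τ10 τ20 γ10 γ20 A1 A2 hw1 hw2 hβ hτ10 hτ20 hsum0
    hA2 hA
end

section
/- A harmful (distorted) taxation: suppose β_1 = β_2 = β ∈ (0,1), γ_{d,0} = 0, A_1 > A_2 > 0, and the tax distortion (1−τ_{2,1})A_2 > (1−τ_{1,1})A_1 holds (so the more productive agent 1 is over-taxed and does not produce in equilibrium). Then the equilibrium GDP with intervention is strictly below the GDP without intervention: Y_1 < Y_1* = (β/(1+β))(w_{1,0} + w_{2,0})·A_1. This holds even when there is no corruption (γ_{1,0} + γ_{2,0} = 1 and γ_{1,1} + γ_{2,1} = 1). -/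
open Set

/-- Proposition 4.5: a harmful, distorted taxation:
in the two-agent log-linear economy with `β1 = β2 = β ∈ (0,1)`, no public
investment (`γd = 0`), `A1 > A2 > 0`, and a tax distortion
`(1−τ21)A2 > (1−τ11)A1` (the more productive agent 1 is over-taxed and does not
produce in equilibrium), the closed-form equilibrium GDP with intervention,
`Y1 = (1 − τ21 γc1)·A2·[β((1−τ20)w2 + γ20 T0)/(1+β) + β((1−τ10)w1 + γ10 T0)/(1+β)]
/ [1 + ((γ21+γ11)/(1+β))·τ21/(1−τ21)]`, is strictly below the GDP without
intervention `Y1* = (β/(1+β))(w1 + w2)·A1`.  This holds even when there is no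
corruption (`γ10 + γ20 = 1` and `γ11 + γ21 = 1`). -/
theorem harmful_distorted_taxation
    (w1 w2 β τ10 τ20 τ11 τ21 γ10 γ20 γ11 γ21 A1 A2 : ℝ)
    (hw1 : 0 < w1) (hw2 : 0 < w2) (hβ : β ∈ Set.Ioo (0 : ℝ) 1)
    (hτ10 : τ10 ∈ Set.Ico (0 : ℝ) 1) (hτ20 : τ20 ∈ Set.Ico (0 : ℝ) 1)
    (hτ11 : τ11 ∈ Set.Ico (0 : ℝ) 1) (hτ21 : τ21 ∈ Set.Ico (0 : ℝ) 1)
    (hγ10 : γ10 ∈ Set.Icc (0 : ℝ) 1) (hγ20 : γ20 ∈ Set.Icc (0 : ℝ) 1)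
    (hγ11 : γ11 ∈ Set.Icc (0 : ℝ) 1) (hγ21 : γ21 ∈ Set.Icc (0 : ℝ) 1)
    (hsum0 : γ10 + γ20 ≤ 1) (hsum1 : γ11 + γ21 ≤ 1)
    (hA2 : 0 < A2) (hA : A2 < A1)
    (hdistort : (1 - τ21) * A2 > (1 - τ11) * A1) :
    (1 - τ21 * (1 - γ11 - γ21)) * A2 *
        ((β * ((1 - τ20) * w2 + γ20 * (τ10 * w1 + τ20 * w2)) / (1 + β) +
          β * ((1 - τ10) * w1 + γ10 * (τ10 * w1 + τ20 * w2)) / (1 + β)) /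
         (1 + ((γ21 + γ11) / (1 + β)) * (τ21 / (1 - τ21)))) <
      β / (1 + β) * (w1 + w2) * A1 ∧
    β / (1 + β) * (w1 + w2) * A1 = β / (1 + β) * (w1 + w2) * max A1 A2 := by
  obtain ⟨hβ0, hβ1⟩ := hβ
  obtain ⟨hτ100, hτ101⟩ := hτ10
  obtain ⟨hτ200, hτ201⟩ := hτ20
  obtain ⟨hτ210, hτ211⟩ := hτ21
  have h1β : (0:ℝ) < 1 + β := by linarith
  constructor
  · set T0 := τ10 * w1 + τ20 * w2 with hT0
    have hT0nn : 0 ≤ T0 := by positivity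
    have hN : 0 ≤ β * ((1 - τ20) * w2 + γ20 * T0) / (1 + β) +
        β * ((1 - τ10) * w1 + γ10 * T0) / (1 + β) := by
      have h1 : 0 ≤ (1 - τ20) * w2 := by nlinarith
      have h2 : 0 ≤ (1 - τ10) * w1 := by nlinarith
      have h3 : 0 ≤ γ20 * T0 := mul_nonneg hγ20.1 hT0nn
      have h4 : 0 ≤ γ10 * T0 := mul_nonneg hγ10.1 hT0nn
      positivity
    set N := β * ((1 - τ20) * w2 + γ20 * T0) / (1 + β) +
        β * ((1 - τ10) * w1 + γ10 * T0) / (1 + β) with hNdef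
    have hD : 1 ≤ 1 + ((γ21 + γ11) / (1 + β)) * (τ21 / (1 - τ21)) := by
      have : 0 ≤ ((γ21 + γ11) / (1 + β)) * (τ21 / (1 - τ21)) := by
        have h1 : 0 ≤ γ21 + γ11 := by linarith [hγ21.1, hγ11.1]
        have h2 : 0 ≤ τ21 / (1 - τ21) := div_nonneg hτ210 (by linarith)
        positivity
      linarith
    have hfrac : N / (1 + ((γ21 + γ11) / (1 + β)) * (τ21 / (1 - τ21))) ≤ N :=
      div_le_self hN hD
    have hF : 1 - τ21 * (1 - γ11 - γ21) ≤ 1 := by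
      have : 0 ≤ τ21 * (1 - γ11 - γ21) := mul_nonneg hτ210 (by linarith)
      linarith
    have hF0 : 0 ≤ 1 - τ21 * (1 - γ11 - γ21) := by
      have : τ21 * (1 - γ11 - γ21) ≤ 1 * 1 := by
        apply mul_le_mul (le_of_lt hτ211) (by linarith [hγ11.1, hγ21.1]) (by linarith) one_pos.le
      linarith
    have hNbound : N ≤ β / (1 + β) * (w1 + w2) := by
      rw [hNdef, ← add_div, div_mul_eq_mul_div]
      gcongr ?_ / _
      have key : (1 - τ20) * w2 + γ20 * T0 + ((1 - τ10) * w1 + γ10 * T0) ≤ w1 + w2 := by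
        have : (γ10 + γ20) * T0 ≤ 1 * T0 := mul_le_mul_of_nonneg_right hsum0 hT0nn
        rw [hT0] at *
        nlinarith
      nlinarith
    calc (1 - τ21 * (1 - γ11 - γ21)) * A2 *
          (N / (1 + ((γ21 + γ11) / (1 + β)) * (τ21 / (1 - τ21))))
        ≤ (1 - τ21 * (1 - γ11 - γ21)) * A2 * N := by
          apply mul_le_mul_of_nonneg_left hfrac (mul_nonneg hF0 hA2.le)
      _ ≤ 1 * A2 * N := by
          apply mul_le_mul_of_nonneg_right (mul_le_mul_of_nonneg_right hF hA2.le) hN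
      _ ≤ A2 * (β / (1 + β) * (w1 + w2)) := by
          rw [one_mul]; exact mul_le_mul_of_nonneg_left hNbound hA2.le
      _ < A1 * (β / (1 + β) * (w1 + w2)) := by
          apply mul_lt_mul_of_pos_right hA; positivity
      _ = β / (1 + β) * (w1 + w2) * A1 := by ring
  · rw [max_eq_left hA.le]
end
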